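/- arXiv:1011.2348 — 9 statements merged into one kernel-verified Lean document; each statement's English description precedes it below -/
import Mathlib

section
/- Let O, F, I partition [n] with O nonempty (obligatory, facultative, forbidden indices), and let D be the set of probability vectors q on [n] that are uniform on their support, where the support contains O and is contained in O ∪ F. Then for any fixed j₀ ∈ O, the convex hull of D equals the polytope of x ∈ R^n satisfying: x_j = 0 for j ∈ I; x_j = x_{j₀} for j ∈ O; 0 ≤ x_j ≤ x_{j₀} for j ∈ F; and ∑_j x_j = 1. -/
/-!
Write a point `x` of the polytope as `m • 1_S + (x - m)⁺`, where `S` is its support and `m` its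
least positive coordinate. The first term is a multiple of the uniform vector on `S`; the second,
rescaled, lies again in the polytope and has a strictly smaller support, so induction on the size
of the support puts `x` in the convex hull of `D`. Conversely every uniform vector satisfies the
constraints of the polytope, which is convex.
-/

open Finset

section Descent

variable {𝕜 E : Type*} [Semiring 𝕜] [PartialOrder 𝕜] [AddCommMonoid E] [Module 𝕜 E]

theorem subset_convexHull_of_mem_or_mem_segment {s t : Set E} (rank : E → ℕ)
    (h : ∀ x ∈ t, x ∈ s ∨ ∃ d ∈ s, ∃ y ∈ t, rank y < rank x ∧ x ∈ segment 𝕜 d y) :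
    t ⊆ convexHull 𝕜 s := by
  intro x hx
  induction hk : rank x using Nat.strong_induction_on generalizing x with
  | _ k ih =>
  rcases h x hx with hs | ⟨d, hd, y, hy, hlt, hseg⟩
  · exact subset_convexHull 𝕜 s hs
  · exact (convex_convexHull 𝕜 s).segment_subset (subset_convexHull 𝕜 s hd)
      (ih _ (hk ▸ hlt) hy rfl) hseg

end Descent

theorem eq_ite_add_max_sub {α : Type*} [AddCommGroup α] [LinearOrder α] [IsOrderedAddMonoid α]
    {a m : α} (ha : 0 ≤ a) (hm : 0 ≤ m) (hma : 0 < a → m ≤ a) :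
    a = (if 0 < a then m else 0) + max (a - m) 0 := by
  split_ifs with h
  · rw [max_eq_left (sub_nonneg.2 (hma h)), add_sub_cancel]
  · simp [le_antisymm (not_lt.1 h) ha, hm]

namespace UniformSupport

variable {ι : Type*} [Fintype ι] [DecidableEq ι]

def uniformVectors (O F : Finset ι) : Set (ι → ℝ) :=
  {q | ∃ S : Finset ι, O ⊆ S ∧ S ⊆ O ∪ F ∧ ∀ j, q j = if j ∈ S then ((S.card : ℝ))⁻¹ else 0}

def polytope (O F I : Finset ι) (j₀ : ι) : Set (ι → ℝ) :=
  {x | (∀ j ∈ I, x j = 0) ∧ (∀ j ∈ O, x j = x j₀) ∧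
    (∀ j ∈ F, 0 ≤ x j ∧ x j ≤ x j₀) ∧ ∑ j, x j = 1}

noncomputable def posSupport (x : ι → ℝ) : Finset ι := {j | 0 < x j}

omit [DecidableEq ι] in
theorem mem_posSupport {x : ι → ℝ} {j : ι} : j ∈ posSupport x ↔ 0 < x j := by
  simp [posSupport]

variable {O F I : Finset ι} {j₀ : ι}

omit [DecidableEq ι] in
theorem convex_polytope : Convex ℝ (polytope O F I j₀) := by
  rintro x ⟨hxI, hxO, hxF, hxs⟩ y ⟨hyI, hyO, hyF, hys⟩ a b ha hb hab
  refine ⟨fun j hj => ?_, fun j hj => ?_, fun j hj => ?_, ?_⟩ <;>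
    simp only [Pi.add_apply, Pi.smul_apply, smul_eq_mul]
  · simp [hxI j hj, hyI j hj]
  · rw [hxO j hj, hyO j hj]
  · obtain ⟨hx0, hxj⟩ := hxF j hj
    obtain ⟨hy0, hyj⟩ := hyF j hj
    constructor
    · positivity
    · gcongr
  · rw [sum_add_distrib, ← mul_sum, ← mul_sum, hxs, hys, mul_one, mul_one, hab]

theorem uniformVectors_subset_polytope (hOI : Disjoint O I) (hFI : Disjoint F I)
    (hj₀ : j₀ ∈ O) : uniformVectors O F ⊆ polytope O F I j₀ := by
  rintro q ⟨S, hOS, hSOF, hq⟩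
  have hj₀S : j₀ ∈ S := hOS hj₀
  refine ⟨fun j hj => ?_, fun j hj => ?_, fun j _ => ?_, ?_⟩
  · have hjS : j ∉ S := fun hjS =>
      disjoint_left.1 (disjoint_union_left.2 ⟨hOI, hFI⟩) (hSOF hjS) hj
    rw [hq, if_neg hjS]
  · rw [hq, hq j₀, if_pos (hOS hj), if_pos hj₀S]
  · rw [hq, hq j₀, if_pos hj₀S]
    split_ifs <;> simp
  · simp_rw [hq]
    rw [sum_ite_mem, univ_inter, sum_const, nsmul_eq_mul]
    exact mul_inv_cancel₀ (Nat.cast_ne_zero.2 (card_ne_zero_of_mem hj₀S))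

section Cover

variable (hcover : O ∪ F ∪ I = univ)
include hcover

theorem mem_or_mem_or_mem (j : ι) : j ∈ O ∨ j ∈ F ∨ j ∈ I := by
  have hj := mem_univ j
  rw [← hcover] at hj
  simpa [or_assoc] using hj

theorem pos_of_mem_polytope {x : ι → ℝ} (hx : x ∈ polytope O F I j₀) : 0 < x j₀ := by
  obtain ⟨hxI, hxO, hxF, hxs⟩ := hx
  by_contra! h
  have hle : ∀ j, x j ≤ 0 := fun j => by
    rcases mem_or_mem_or_mem hcover j with hj | hj | hj
    · exact (hxO j hj).trans_le h
    · exact (hxF j hj).2.trans h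
    · exact (hxI j hj).le
  linarith [sum_nonpos fun j (_ : j ∈ univ) => hle j]

theorem mem_Icc_of_mem_polytope {x : ι → ℝ} (hx : x ∈ polytope O F I j₀) (j : ι) :
    0 ≤ x j ∧ x j ≤ x j₀ := by
  have h₀ := pos_of_mem_polytope hcover hx
  obtain ⟨hxI, hxO, hxF, -⟩ := hx
  rcases mem_or_mem_or_mem hcover j with hj | hj | hj
  · rw [hxO j hj]
    exact ⟨h₀.le, le_rfl⟩
  · exact hxF j hj
  · rw [hxI j hj]
    exact ⟨le_rfl, h₀.le⟩

theorem subset_posSupport {x : ι → ℝ} (hx : x ∈ polytope O F I j₀) : O ⊆ posSupport x :=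
  fun j hj => mem_posSupport.2 (hx.2.1 j hj ▸ pos_of_mem_polytope hcover hx)

theorem posSupport_subset_union {x : ι → ℝ} (hx : x ∈ polytope O F I j₀) :
    posSupport x ⊆ O ∪ F := by
  intro j hj
  rcases mem_or_mem_or_mem hcover j with hj' | hj' | hj'
  · exact mem_union_left _ hj'
  · exact mem_union_right _ hj'
  · exact absurd (hx.1 j hj') (mem_posSupport.1 hj).ne'

end Cover

omit [DecidableEq ι] in
theorem truncate_mem_polytope {x : ι → ℝ} (hx : x ∈ polytope O F I j₀) {m c : ℝ}
    (hm : 0 ≤ m) (hc : 0 ≤ c) (hsum : c * ∑ j, max (x j - m) 0 = 1) :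
    (fun j => c * max (x j - m) 0) ∈ polytope O F I j₀ := by
  obtain ⟨hxI, hxO, hxF, -⟩ := hx
  refine ⟨fun j hj => ?_, fun j hj => by simp only [hxO j hj], fun j hj => ?_, by
    rwa [← mul_sum]⟩
  · simp [hxI j hj, hm]
  · constructor
    · positivity
    · exact mul_le_mul_of_nonneg_left
        (max_le_max_right 0 (sub_le_sub_right (hxF j hj).2 m)) hc

omit [DecidableEq ι] in
theorem posSupport_truncate_ssubset {x : ι → ℝ} {m c : ℝ} (hm : 0 < m) (hc : 0 < c) {jm : ι}
    (hjm : x jm = m) : posSupport (fun j => c * max (x j - m) 0) ⊂ posSupport x := by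
  refine (ssubset_iff_of_subset fun j hj => ?_).2
    ⟨jm, mem_posSupport.2 (hjm ▸ hm), fun hjm' => ?_⟩
  · simp only [mem_posSupport, mul_pos_iff_of_pos_left hc, lt_max_iff, sub_pos, lt_irrefl,
      or_false] at hj
    exact mem_posSupport.2 (hm.trans hj)
  · simp only [mem_posSupport, hjm, sub_self, max_self, mul_zero, lt_irrefl] at hjm'

theorem mem_uniformVectors_or_mem_segment (hcover : O ∪ F ∪ I = univ) (hj₀ : j₀ ∈ O)
    {x : ι → ℝ} (hx : x ∈ polytope O F I j₀) :
    x ∈ uniformVectors O F ∨ ∃ d ∈ uniformVectors O F, ∃ y ∈ polytope O F I j₀,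
      #(posSupport y) < #(posSupport x) ∧ x ∈ segment ℝ d y := by
  set S := posSupport x
  have hOS := subset_posSupport hcover hx
  have hSOF := posSupport_subset_union hcover hx
  obtain ⟨jm, hjmS, hmin⟩ := S.exists_min_image x ⟨j₀, hOS hj₀⟩
  generalize hm_def : x jm = m at hmin
  have hm : 0 < m := hm_def ▸ mem_posSupport.1 hjmS
  have hlayer (j : ι) : x j = (if j ∈ S then m else 0) + max (x j - m) 0 := by
    simpa only [S, mem_posSupport] using eq_ite_add_max_sub
      (mem_Icc_of_mem_polytope hcover hx j).1 hm.le fun h => hmin j (mem_posSupport.2 h)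
  set r := ∑ j, max (x j - m) 0
  have hsum : m * #S + r = 1 := by
    rw [← hx.2.2.2, sum_congr rfl fun j _ => hlayer j, sum_add_distrib, sum_ite_mem, univ_inter,
      sum_const, nsmul_eq_mul, mul_comm]
  have hr₀ : 0 ≤ r := sum_nonneg fun j _ => le_max_right _ _
  rcases hr₀.eq_or_lt with hr | hr
  · left
    have hmS : m = (#S : ℝ)⁻¹ := eq_inv_of_mul_eq_one_left (by linarith)
    refine ⟨S, hOS, hSOF, fun j => ?_⟩
    rw [hlayer j, (sum_eq_zero_iff_of_nonneg fun j _ => le_max_right _ _).1 hr.symm j (mem_univ j),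
      add_zero, hmS]
  right
  have hS : (#S : ℝ) ≠ 0 := Nat.cast_ne_zero.2 (card_ne_zero_of_mem hjmS)
  refine ⟨_, ⟨S, hOS, hSOF, fun j => rfl⟩, fun j => r⁻¹ * max (x j - m) 0,
    truncate_mem_polytope hx hm.le (inv_nonneg.2 hr.le) (inv_mul_cancel₀ hr.ne'),
    card_lt_card (posSupport_truncate_ssubset hm (inv_pos.2 hr) hm_def), m * #S, r,
    mul_nonneg hm.le (Nat.cast_nonneg _), hr.le, hsum, funext fun j => ?_⟩
  simp only [Pi.add_apply, Pi.smul_apply, smul_eq_mul]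
  refine Eq.trans ?_ (hlayer j).symm
  split_ifs
  · field_simp
  · simp [hr.ne']

end UniformSupport

open UniformSupport in
theorem stmt2_general (n : ℕ) (O F I : Finset (Fin n))
    (hOI : Disjoint O I) (hFI : Disjoint F I)
    (hcover : O ∪ F ∪ I = Finset.univ)
    (j₀ : Fin n) (hj₀ : j₀ ∈ O) :
    convexHull ℝ
      {q : Fin n → ℝ | ∃ S : Finset (Fin n), O ⊆ S ∧ S ⊆ O ∪ F ∧
        ∀ j, q j = if j ∈ S then ((S.card : ℝ))⁻¹ else 0}
    = {x : Fin n → ℝ | (∀ j ∈ I, x j = 0) ∧ (∀ j ∈ O, x j = x j₀) ∧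
        (∀ j ∈ F, 0 ≤ x j ∧ x j ≤ x j₀) ∧ ∑ j, x j = 1} := by
  show convexHull ℝ (uniformVectors O F) = polytope O F I j₀
  refine (convexHull_min (uniformVectors_subset_polytope hOI hFI hj₀) convex_polytope).antisymm ?_
  exact subset_convexHull_of_mem_or_mem_segment (fun x => #(posSupport x))
    fun _ => mem_uniformVectors_or_mem_segment hcover hj₀

theorem stmt2 (n : ℕ) (O F I : Finset (Fin n))
    (hOF : Disjoint O F) (hOI : Disjoint O I) (hFI : Disjoint F I)
    (hcover : O ∪ F ∪ I = Finset.univ) (hO : O.Nonempty)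
    (j₀ : Fin n) (hj₀ : j₀ ∈ O) :
    convexHull ℝ
      {q : Fin n → ℝ | ∃ S : Finset (Fin n), O ⊆ S ∧ S ⊆ O ∪ F ∧
        ∀ j, q j = if j ∈ S then ((S.card : ℝ))⁻¹ else 0}
    = {x : Fin n → ℝ | (∀ j ∈ I, x j = 0) ∧ (∀ j ∈ O, x j = x j₀) ∧
        (∀ j ∈ F, 0 ≤ x j ∧ x j ≤ x j₀) ∧ ∑ j, x j = 1} :=
  stmt2_general n O F I hOI hFI hcover j₀ hj₀
end

section
/- With the notation of the uniform-transition polytope (O nonempty, j₀ ∈ O), every extreme point of the polytope {x : x_j = 0 for j ∈ I, x_j = x_{j₀} for j ∈ O, 0 ≤ x_j ≤ x_{j₀} for j ∈ F, ∑ x_j = 1} is a uniform probability measure on a support S with O ⊆ S ⊆ O ∪ F. -/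
/-!
If some coordinate `x j₁` with `j₁ ∈ F` lies strictly between `0` and `x j₀`, take `j₁` with the
largest such value and shift mass between `j₁` and the top level set `{j | x j = x j₀}`
(which contains `O`). By the choice of `j₁`, small shifts of either sign keep every constraint
(the other coordinates of `F` below the top stay below the moved top level), so `x` is the
midpoint of two distinct feasible points. Hence an extreme point takes only the values `0` and
`x j₀`, and the normalisation `∑ j, x j = 1` forces `x j₀ = 1 / #{j | x j = x j₀}`.
-/

open Finset

theorem eq_zero_of_add_mem_of_sub_mem_of_mem_extremePoints {𝕜 E : Type*} [Field 𝕜]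
    [LinearOrder 𝕜] [IsStrictOrderedRing 𝕜] [AddCommGroup E] [Module 𝕜 E] {A : Set E} {x v : E}
    (hx : x ∈ A.extremePoints 𝕜) (hadd : x + v ∈ A) (hsub : x - v ∈ A) : v = 0 :=
  add_eq_left.1 (hx.2 hadd hsub (mem_openSegment_add_sub x v))

theorem card_mul_eq_one_of_sum_eq_one {ι : Type*} [Fintype ι] {x : ι → ℝ} {c : ℝ}
    (hsum : ∑ j, x j = 1) (hval : ∀ j, x j = 0 ∨ x j = c) :
    (#{j | x j = c} : ℝ) * c = 1 := by
  classical
  rw [← hsum, ← sum_filter_of_ne (p := fun j => x j = c)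
    (fun j _ hj => (hval j).resolve_left hj), sum_congr rfl (fun j hj => (mem_filter.1 hj).2),
    sum_const, nsmul_eq_mul]

section TransitionPolytope

variable {ι : Type*} [Fintype ι] [DecidableEq ι]

def transitionPolytope (O F I : Finset ι) (j₀ : ι) : Set (ι → ℝ) :=
  {x | (∀ j ∈ I, x j = 0) ∧ (∀ j ∈ O, x j = x j₀) ∧
    (∀ j ∈ F, 0 ≤ x j ∧ x j ≤ x j₀) ∧ ∑ j, x j = 1}

/-- Unit mass into `j₁`, taken uniformly from the level set `{j | x j = x j₀}`. -/
noncomputable def levelShift (x : ι → ℝ) (j₀ j₁ : ι) : ι → ℝ := fun j =>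
  (if j = j₁ then 1 else 0) - if x j = x j₀ then (#{j | x j = x j₀} : ℝ)⁻¹ else 0

theorem sum_levelShift (x : ι → ℝ) (j₀ j₁ : ι) : ∑ j, levelShift x j₀ j₁ j = 0 := by
  have hcard : (#{j | x j = x j₀} : ℝ) ≠ 0 :=
    Nat.cast_ne_zero.2 (card_ne_zero.2 ⟨j₀, by simp⟩)
  simp only [levelShift, sum_sub_distrib, sum_ite_eq', mem_univ, if_true, ← sum_filter,
    sum_const, nsmul_eq_mul, mul_inv_cancel₀ hcard, sub_self]

variable {O F I : Finset ι} {j₀ j₁ : ι} {x : ι → ℝ}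

theorem add_smul_levelShift_mem (hx : x ∈ transitionPolytope O F I j₀) (hpos : 0 < x j₁)
    (hlt : x j₁ < x j₀) (hmax : ∀ j ∈ F, x j < x j₀ → x j ≤ x j₁) {e : ℝ}
    (he₁ : 2 * |e| ≤ x j₁) (he₂ : 2 * |e| ≤ x j₀ - x j₁) :
    x + e • levelShift x j₀ j₁ ∈ transitionPolytope O F I j₀ := by
  obtain ⟨hI, hO, hF, hsum⟩ := hx
  set m : ℝ := ((#{j | x j = x j₀} : ℕ) : ℝ)
  have hm : 1 ≤ m := Nat.one_le_cast.2 (card_pos.2 ⟨j₀, by simp⟩)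
  have hshift : |e * m⁻¹| ≤ |e| := by
    rw [abs_mul, abs_of_pos (inv_pos.2 (one_pos.trans_le hm))]
    exact mul_le_of_le_one_right (abs_nonneg e) (inv_le_one_of_one_le₀ hm)
  have htop : ∀ j, x j = x j₀ → levelShift x j₀ j₁ j = -m⁻¹ := fun j hj => by
    have : j ≠ j₁ := by rintro rfl; exact hlt.ne hj
    simp [levelShift, this, hj, m]
  have hj₁ : levelShift x j₀ j₁ j₁ = 1 := by simp [levelShift, hlt.ne]
  have hrest : ∀ j, j ≠ j₁ → x j ≠ x j₀ → levelShift x j₀ j₁ j = 0 := fun j h₁ h₂ => by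
    simp [levelShift, h₁, h₂]
  have hy₀ : x j₀ + e * levelShift x j₀ j₁ j₀ = x j₀ - e * m⁻¹ := by rw [htop j₀ rfl]; ring
  obtain ⟨hu₁, hu₂⟩ := abs_le.1 hshift
  have he₃ := neg_abs_le e
  have he₄ := le_abs_self e
  refine ⟨fun j hj => ?_, fun j hj => ?_, fun j hj => ?_, ?_⟩ <;>
    simp only [Pi.add_apply, Pi.smul_apply, smul_eq_mul]
  · have hj₁ : j ≠ j₁ := by rintro rfl; exact hpos.ne' (hI _ hj)
    rw [hrest j hj₁ (by linarith [hI j hj]), hI j hj, mul_zero, add_zero]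
  · rw [htop j (hO j hj), hO j hj, hy₀]; ring
  · rw [hy₀]
    by_cases htopj : x j = x j₀
    · rw [htop j htopj, htopj]
      constructor <;> linarith
    by_cases hjj₁ : j = j₁
    · subst hjj₁
      rw [hj₁]
      constructor <;> linarith
    rw [hrest j hjj₁ htopj]
    have := hmax j hj (lt_of_le_of_ne (hF j hj).2 htopj)
    constructor <;> linarith [(hF j hj).1]
  · rw [sum_add_distrib, hsum, ← mul_sum, sum_levelShift, mul_zero, add_zero]

theorem notMem_extremePoints_of_pos_of_lt (hx : x ∈ transitionPolytope O F I j₀)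
    (hpos : 0 < x j₁) (hlt : x j₁ < x j₀) (hmax : ∀ j ∈ F, x j < x j₀ → x j ≤ x j₁) :
    x ∉ (transitionPolytope O F I j₀).extremePoints ℝ := by
  intro hext
  obtain ⟨δ, hδ, hδ₁, hδ₂⟩ : ∃ δ > 0, 2 * δ ≤ x j₁ ∧ 2 * δ ≤ x j₀ - x j₁ :=
    ⟨min (x j₁) (x j₀ - x j₁) / 2, half_pos (lt_min hpos (sub_pos.2 hlt)),
      by linarith [min_le_left (x j₁) (x j₀ - x j₁)],
      by linarith [min_le_right (x j₁) (x j₀ - x j₁)]⟩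
  have hmem : ∀ e, |e| = δ → x + e • levelShift x j₀ j₁ ∈ transitionPolytope O F I j₀ :=
    fun e he => add_smul_levelShift_mem hx hpos hlt hmax (he ▸ hδ₁) (he ▸ hδ₂)
  have hzero := eq_zero_of_add_mem_of_sub_mem_of_mem_extremePoints hext
    (hmem δ (abs_of_pos hδ)) (by simpa [sub_eq_add_neg] using hmem (-δ) (by simp [hδ.le]))
  have hj₁ : levelShift x j₀ j₁ j₁ = 1 := by simp [levelShift, hlt.ne]
  simpa [hj₁, hδ.ne'] using congrFun hzero j₁

theorem eq_zero_or_eq_of_mem_extremePoints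
    (hx : x ∈ (transitionPolytope O F I j₀).extremePoints ℝ) {j : ι} (hj : j ∈ F) :
    x j = 0 ∨ x j = x j₀ := by
  have hF := hx.1.2.2.1
  rcases (hF j hj).2.eq_or_lt with htop | hlt
  · exact Or.inr htop
  obtain ⟨j₁, hj₁, hmax⟩ := exists_max_image {i ∈ F | x i < x j₀} x ⟨j, mem_filter.2 ⟨hj, hlt⟩⟩
  obtain ⟨hj₁F, hj₁lt⟩ := mem_filter.1 hj₁
  have hmax' : ∀ i ∈ F, x i < x j₀ → x i ≤ x j₁ := fun i hi h => hmax i (mem_filter.2 ⟨hi, h⟩)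
  have hzero : x j₁ = 0 := by
    by_contra hne
    exact notMem_extremePoints_of_pos_of_lt hx.1
      ((hF j₁ hj₁F).1.lt_of_ne' hne) hj₁lt hmax' hx
  exact Or.inl (le_antisymm (hzero ▸ hmax' j hj hlt) (hF j hj).1)

end TransitionPolytope

theorem stmt3_general (n : ℕ) (O F I : Finset (Fin n))
    (hcover : O ∪ F ∪ I = Finset.univ)
    (j₀ : Fin n) :
    ∀ x ∈ Set.extremePoints ℝ
      {x : Fin n → ℝ | (∀ j ∈ I, x j = 0) ∧ (∀ j ∈ O, x j = x j₀) ∧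
        (∀ j ∈ F, 0 ≤ x j ∧ x j ≤ x j₀) ∧ ∑ j, x j = 1},
      ∃ S : Finset (Fin n), O ⊆ S ∧ S ⊆ O ∪ F ∧
        ∀ j, x j = if j ∈ S then ((S.card : ℝ))⁻¹ else 0 := by
  intro x hx
  obtain ⟨hI, hO, -, hsum⟩ := hx.1
  have hpart : ∀ j, j ∈ O ∨ j ∈ F ∨ j ∈ I := fun j => by
    simpa [or_assoc] using hcover.ge (mem_univ j)
  have hval : ∀ j, x j = 0 ∨ x j = x j₀ := fun j => by
    rcases hpart j with hj | hj | hj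
    exacts [Or.inr (hO j hj), eq_zero_or_eq_of_mem_extremePoints hx hj, Or.inl (hI j hj)]
  have hcard := card_mul_eq_one_of_sum_eq_one hsum hval
  have htop : x j₀ ≠ 0 := right_ne_zero_of_mul_eq_one hcard
  refine ⟨({j | x j = x j₀} : Finset (Fin n)), fun j hj => by simp [hO j hj],
    fun j hj => ?_, fun j => ?_⟩
  · have hj : x j = x j₀ := by simpa using hj
    rcases hpart j with hj' | hj' | hj'
    exacts [mem_union_left _ hj', mem_union_right _ hj', absurd (hj ▸ hI j hj') htop]
  · simp only [Finset.mem_filter, Finset.mem_univ, true_and]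
    split_ifs with hj
    · exact hj.trans (eq_inv_of_mul_eq_one_right hcard)
    · exact (hval j).resolve_right hj

theorem stmt3 (n : ℕ) (O F I : Finset (Fin n))
    (hOF : Disjoint O F) (hOI : Disjoint O I) (hFI : Disjoint F I)
    (hcover : O ∪ F ∪ I = Finset.univ) (hO : O.Nonempty)
    (j₀ : Fin n) (hj₀ : j₀ ∈ O) :
    ∀ x ∈ Set.extremePoints ℝ
      {x : Fin n → ℝ | (∀ j ∈ I, x j = 0) ∧ (∀ j ∈ O, x j = x j₀) ∧
        (∀ j ∈ F, 0 ≤ x j ∧ x j ≤ x j₀) ∧ ∑ j, x j = 1},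
      ∃ S : Finset (Fin n), O ⊆ S ∧ S ⊆ O ∪ F ∧
        ∀ j, x j = if j ∈ S then ((S.card : ℝ))⁻¹ else 0 :=
  stmt3_general n O F I hcover j₀
end

section
/- Let O = ∅ and suppose there exists k ∈ I with Z_k > 0, where Z is a probability vector on [n]. Let D be the set consisting of Z together with all probability vectors uniform on a nonempty support contained in F. Then the convex hull of D is the simplex of dimension |F| defined by: ∑_j x_j = 1, x_k ≥ 0, x_j = (Z_j/Z_k) x_k for j ∈ I \ {k}, and x_j ≥ (Z_j/Z_k) x_k for j ∈ F. -/
open BigOperators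

theorem stmt5 (n : ℕ) (F I : Finset (Fin n))
    (hFI : Disjoint F I) (hcover : F ∪ I = Finset.univ)
    (Z : Fin n → ℝ) (hZ0 : ∀ j, 0 ≤ Z j) (hZ1 : ∑ j, Z j = 1)
    (k : Fin n) (hk : k ∈ I) (hZk : 0 < Z k) :
    convexHull ℝ
      (insert Z
        {q : Fin n → ℝ | ∃ S : Finset (Fin n), S.Nonempty ∧ S ⊆ F ∧
          ∀ j, q j = if j ∈ S then ((S.card : ℝ))⁻¹ else 0})
    = {x : Fin n → ℝ | (∑ j, x j = 1) ∧ 0 ≤ x k ∧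
        (∀ j ∈ I, j ≠ k → x j = (Z j / Z k) * x k) ∧
        (∀ j ∈ F, (Z j / Z k) * x k ≤ x j)} ∧
    Module.finrank ℝ
      (affineSpan ℝ
        (convexHull ℝ
          (insert Z
            {q : Fin n → ℝ | ∃ S : Finset (Fin n), S.Nonempty ∧ S ⊆ F ∧
              ∀ j, q j = if j ∈ S then ((S.card : ℝ))⁻¹ else 0}))).direction = F.card := by
  have hZkne : Z k ≠ 0 := hZk.ne'
  have hkF : k ∉ F := fun h => Finset.disjoint_left.mp hFI h hk
  have hmemI : ∀ j : Fin n, j ∉ F → j ∈ I := by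
    intro j hj
    have : j ∈ F ∪ I := hcover ▸ Finset.mem_univ j
    rcases Finset.mem_union.mp this with h | h
    · exact absurd h hj
    · exact h
  set D : Set (Fin n → ℝ) := {q : Fin n → ℝ | ∃ S : Finset (Fin n), S.Nonempty ∧ S ⊆ F ∧
      ∀ j, q j = if j ∈ S then ((S.card : ℝ))⁻¹ else 0} with hDdef
  -- the hull equality
  have hull_eq : convexHull ℝ (insert Z D)
      = {x : Fin n → ℝ | (∑ j, x j = 1) ∧ 0 ≤ x k ∧
          (∀ j ∈ I, j ≠ k → x j = (Z j / Z k) * x k) ∧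
          (∀ j ∈ F, (Z j / Z k) * x k ≤ x j)} := by
    apply Set.Subset.antisymm
    · -- convexHull ⊆ T : T is convex and contains the generators
      apply convexHull_min
      · rintro q (rfl | ⟨S, hSne, hSF, hq⟩)
        · refine ⟨hZ1, hZ0 k, ?_, ?_⟩
          · intro j hj hjk
            rw [div_mul_cancel₀ _ hZkne]
          · intro j hj
            rw [div_mul_cancel₀ _ hZkne]
        · have hkS : k ∉ S := fun h => hkF (hSF h)
          have hqk : q k = 0 := by rw [hq k, if_neg hkS]
          have hScard : (S.card : ℝ) ≠ 0 := by
            exact_mod_cast Finset.card_ne_zero_of_mem hSne.choose_spec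
          refine ⟨?_, ?_, ?_, ?_⟩
          · have : ∑ j, q j = ∑ j ∈ S, (S.card : ℝ)⁻¹ := by
              rw [Finset.sum_congr rfl fun j _ => hq j, ← Finset.sum_filter,
                Finset.filter_mem_eq_inter, Finset.univ_inter]
            rw [this, Finset.sum_const, nsmul_eq_mul, mul_inv_cancel₀ hScard]
          · rw [hqk]
          · intro j hj hjk
            have hjS : j ∉ S := fun h => Finset.disjoint_left.mp hFI (hSF h) hj
            rw [hq j, if_neg hjS, hqk, mul_zero]
          · intro j hj
            rw [hqk, mul_zero, hq j]
            split
            · positivity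
            · exact le_refl 0
      · -- convexity of T
        intro x hx y hy a b ha hb hab
        obtain ⟨hx1, hx2, hx3, hx4⟩ := hx
        obtain ⟨hy1, hy2, hy3, hy4⟩ := hy
        refine ⟨?_, ?_, ?_, ?_⟩
        · simp only [Pi.add_apply, Pi.smul_apply, smul_eq_mul]
          rw [Finset.sum_add_distrib, ← Finset.mul_sum, ← Finset.mul_sum, hx1, hy1]
          linarith
        · simp only [Pi.add_apply, Pi.smul_apply, smul_eq_mul]
          exact add_nonneg (mul_nonneg ha hx2) (mul_nonneg hb hy2)
        · intro j hj hjk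
          simp only [Pi.add_apply, Pi.smul_apply, smul_eq_mul]
          rw [hx3 j hj hjk, hy3 j hj hjk]; ring
        · intro j hj
          simp only [Pi.add_apply, Pi.smul_apply, smul_eq_mul]
          have h1 := mul_le_mul_of_nonneg_left (hx4 j hj) ha
          have h2 := mul_le_mul_of_nonneg_left (hy4 j hj) hb
          nlinarith
    · -- T ⊆ convexHull : explicit convex combination
      rintro x ⟨hs, hxk, hIeq, hFle⟩
      set l : ℝ := x k / Z k with hl
      have hl0 : 0 ≤ l := div_nonneg hxk hZk.le
      have hlk : l * Z k = x k := div_mul_cancel₀ _ hZkne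
      have hxI : ∀ j ∈ I, x j = l * Z j := by
        intro j hj
        by_cases h : j = k
        · subst h; rw [hlk]
        · rw [hIeq j hj h, hl]; ring
      have hxF : ∀ j ∈ F, l * Z j ≤ x j := by
        intro j hj
        have := hFle j hj
        calc l * Z j = Z j / Z k * x k := by rw [hl]; ring
        _ ≤ x j := this
      set c : Fin n → ℝ := fun j => if j = k then l else x j - l * Z j with hc
      set p : Fin n → (Fin n → ℝ) :=
        fun j => if j = k then Z else fun i => if i = j then 1 else 0 with hp
      have hcF : ∀ j ∈ F, c j = x j - l * Z j := by
        intro j hj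
        rw [hc]; simp only
        rw [if_neg (fun h : j = k => hkF (h ▸ hj))]
      have hw : ∀ j ∈ insert k F, 0 ≤ c j := by
        intro j hj
        rcases Finset.mem_insert.mp hj with rfl | hj
        · rw [hc]; simpa using hl0
        · rw [hcF j hj]
          have := hxF j hj
          linarith
      have hsum : ∑ j ∈ insert k F, c j = 1 := by
        rw [Finset.sum_insert hkF]
        have h1 : c k = l := by rw [hc]; simp
        have h2 : ∑ j ∈ F, c j = ∑ j ∈ F, x j - l * ∑ j ∈ F, Z j := by
          rw [Finset.sum_congr rfl hcF, Finset.sum_sub_distrib, Finset.mul_sum]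
        have h3 : ∑ j ∈ F, x j + l * ∑ j ∈ I, Z j = 1 := by
          rw [← hs, ← hcover, Finset.sum_union hFI]
          congr 1
          rw [Finset.mul_sum]
          exact (Finset.sum_congr rfl hxI).symm
        have h4 : ∑ j ∈ F, Z j + ∑ j ∈ I, Z j = 1 := by
          rw [← hZ1, ← hcover, Finset.sum_union hFI]
        rw [h1, h2]
        nlinarith [h3, h4]
      have hmem : ∀ j ∈ insert k F, p j ∈ insert Z D := by
        intro j hj
        rcases Finset.mem_insert.mp hj with rfl | hj
        · rw [hp]; simp
        · have hjk : j ≠ k := fun h => hkF (h ▸ hj)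
          right
          refine ⟨{j}, Finset.singleton_nonempty j, Finset.singleton_subset_iff.mpr hj, ?_⟩
          intro i
          rw [hp]; simp only [if_neg hjk]
          by_cases h : i = j <;> simp [h]
      have hx_eq : (insert k F).centerMass c p = x := by
        rw [Finset.centerMass_eq_of_sum_1 _ _ hsum]
        funext i
        rw [Finset.sum_apply, Finset.sum_insert hkF]
        have hck : c k = l := by rw [hc]; simp
        have hpk : p k = Z := by rw [hp]; simp
        have hterm : ∀ j ∈ F, (c j • p j) i = if i = j then x j - l * Z j else 0 := by
          intro j hj
          have hjk : j ≠ k := fun h => hkF (h ▸ hj)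
          rw [hcF j hj, hp]
          simp only [if_neg hjk, Pi.smul_apply, smul_eq_mul, mul_ite, mul_one, mul_zero]
        rw [Finset.sum_congr rfl hterm, Finset.sum_ite_eq F i (fun j => x j - l * Z j),
          hck, hpk]
        simp only [Pi.smul_apply, smul_eq_mul]
        by_cases hiF : i ∈ F
        · rw [if_pos hiF]; ring
        · rw [if_neg hiF, add_zero]
          have hiI : i ∈ I := hmemI i hiF
          rw [hxI i hiI]
      rw [← hx_eq]
      exact Finset.centerMass_mem_convexHull _ hw (by rw [hsum]; norm_num) hmem
  refine ⟨hull_eq, ?_⟩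
  -- dimension
  rw [affineSpan_convexHull, direction_affineSpan,
    vectorSpan_eq_span_vsub_set_right ℝ (Set.mem_insert Z D)]
  set v : {j // j ∈ F} → (Fin n → ℝ) :=
    fun j => (fun i => if i = j.1 then 1 else 0) - Z with hv
  have hvi : LinearIndependent ℝ v := by
    rw [Fintype.linearIndependent_iff]
    intro g hg
    have hgen : ∀ i : Fin n,
        ∑ j : {j // j ∈ F}, g j * ((if i = j.1 then 1 else 0) - Z i) = 0 := by
      intro i
      have := congrFun hg i
      rw [Finset.sum_apply] at this
      simpa [hv] using this
    have hsum0 : ∑ j : {j // j ∈ F}, g j = 0 := by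
      have := hgen k
      have hne : ∀ j : {j // j ∈ F}, k ≠ j.1 := fun j h => hkF (h ▸ j.2)
      have h2 : ∑ j : {j // j ∈ F}, g j * ((if k = j.1 then 1 else 0 : ℝ) - Z k)
          = -(Z k * ∑ j : {j // j ∈ F}, g j) := by
        rw [Finset.mul_sum, ← Finset.sum_neg_distrib]
        refine Finset.sum_congr rfl fun j _ => ?_
        rw [if_neg (hne j)]; ring
      rw [h2] at this
      have := neg_eq_zero.mp this
      rcases mul_eq_zero.mp this with h | h
      · exact absurd h hZkne
      · exact h
    intro j0
    have hthis := hgen j0.1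
    have h2 : ∑ j : {j // j ∈ F}, g j * ((if j0.1 = j.1 then 1 else 0 : ℝ) - Z j0.1)
        = g j0 - (∑ j : {j // j ∈ F}, g j) * Z j0.1 := by
      simp only [mul_sub]
      rw [Finset.sum_sub_distrib, ← Finset.sum_mul]
      congr 1
      have hterm : ∀ j : {j // j ∈ F}, g j * (if (j0.1 : Fin n) = j.1 then (1:ℝ) else 0)
          = if j0 = j then g j else 0 := by
        intro j
        by_cases h : j0 = j
        · simp [h]
        · rw [if_neg h, if_neg (fun hh => h (Subtype.ext hh)), mul_zero]
      rw [Finset.sum_congr rfl fun j _ => hterm j]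
      simp
    rw [h2, hsum0, zero_mul, sub_zero] at hthis
    exact hthis
  have hspan : Submodule.span ℝ ((fun x => x -ᵥ Z) '' insert Z D)
      = Submodule.span ℝ (Set.range v) := by
    apply le_antisymm
    · rw [Submodule.span_le]
      rintro w ⟨q, hq, rfl⟩
      rcases hq with rfl | ⟨S, hSne, hSF, hq⟩
      · simp only [vsub_eq_sub, sub_self]
        exact Submodule.zero_mem _
      · have hScard : (S.card : ℝ) ≠ 0 := by
          exact_mod_cast Finset.card_ne_zero_of_mem hSne.choose_spec
        have hqZ : q -ᵥ Z = ∑ j ∈ S.attach, (S.card : ℝ)⁻¹ • v ⟨j.1, hSF j.2⟩ := by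
          funext i
          rw [vsub_eq_sub, Pi.sub_apply, Finset.sum_apply]
          have hterm : ∀ j ∈ S.attach,
              ((S.card : ℝ)⁻¹ • v ⟨j.1, hSF j.2⟩) i
              = (if i = j.1 then (S.card : ℝ)⁻¹ else 0) - (S.card : ℝ)⁻¹ * Z i := by
            intro j _
            rw [hv]
            simp only [Pi.smul_apply, Pi.sub_apply, smul_eq_mul, mul_sub, mul_ite,
              mul_one, mul_zero]
          rw [Finset.sum_congr rfl hterm, Finset.sum_sub_distrib]
          have h1 : ∑ j ∈ S.attach, (if i = j.1 then (S.card : ℝ)⁻¹ else 0)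
              = ∑ j ∈ S, (if i = j then (S.card : ℝ)⁻¹ else 0) := by
            rw [← Finset.sum_attach S (fun j => if i = j then (S.card : ℝ)⁻¹ else 0)]
          have h2 : ∑ _j ∈ S.attach, (S.card : ℝ)⁻¹ * Z i = Z i := by
            rw [Finset.sum_const, Finset.card_attach, nsmul_eq_mul, ← mul_assoc,
              mul_inv_cancel₀ hScard, one_mul]
          rw [h1, h2, Finset.sum_ite_eq S i (fun _ => (S.card : ℝ)⁻¹), hq i]
        have hmem : q -ᵥ Z ∈ Submodule.span ℝ (Set.range v) := by
          rw [hqZ]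
          exact Submodule.sum_mem _ fun j _ =>
            Submodule.smul_mem _ _ (Submodule.subset_span ⟨⟨j.1, hSF j.2⟩, rfl⟩)
        exact hmem
    · rw [Submodule.span_le]
      rintro w ⟨j, rfl⟩
      apply Submodule.subset_span
      refine ⟨fun i => if i = j.1 then 1 else 0, Or.inr ⟨{j.1}, Finset.singleton_nonempty _,
        Finset.singleton_subset_iff.mpr j.2, fun i => by
          by_cases h : i = j.1 <;> simp [h]⟩, ?_⟩
      show (fun i => if i = j.1 then (1:ℝ) else 0) -ᵥ Z = v j
      rw [vsub_eq_sub, hv]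
  rw [hspan, finrank_span_eq_card hvi]
  exact Fintype.card_coe F
end

section
/- With T the α-contraction of the PageRank dynamic programming operator (T_i(w) = max_{ν: αν+(1−α)z ∈ P_i} αν·(r_i + w) + (1−α)z·r_i), the unique fixed point w of T satisfies the ergodic dynamic programming equation w_i + ψ = max_{ν ∈ P_i} ν·(r_i + w) for all i, with constant ψ = (1−α) z·w. -/
open BigOperators Matrix

lemma simplex_dot_le {n : ℕ} (ν v : Fin n → ℝ) (hν : ν ∈ stdSimplex ℝ (Fin n)) :
    ν ⬝ᵥ v ≤ ∑ j, |v j| := by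
  obtain ⟨hν0, hν1⟩ := hν
  calc ν ⬝ᵥ v = ∑ j, ν j * v j := rfl
  _ ≤ ∑ j, |v j| := Finset.sum_le_sum (fun j _ => by
      have h2 : ν j ≤ 1 := by
        have := Finset.single_le_sum (f := ν) (fun k _ => hν0 k) (Finset.mem_univ j)
        linarith
      nlinarith [abs_nonneg (v j), le_abs_self (v j), hν0 j])

lemma sSup_image_add (A : Set ℝ) (c : ℝ) (hne : A.Nonempty) (hbdd : BddAbove A) :
    sSup ((fun x => x + c) '' A) = sSup A + c := by
  apply le_antisymm
  · apply csSup_le (hne.image _)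
    rintro _ ⟨x, hx, rfl⟩
    have := le_csSup hbdd hx
    dsimp only
    linarith
  · obtain ⟨B, hB⟩ := hbdd
    have hbdd' : BddAbove ((fun x => x + c) '' A) :=
      ⟨B + c, by rintro _ ⟨x, hx, rfl⟩; have := hB hx; dsimp only; linarith⟩
    have : sSup A ≤ sSup ((fun x => x + c) '' A) - c := by
      apply csSup_le hne
      intro x hx
      have := le_csSup hbdd' ⟨x, hx, rfl⟩
      dsimp only at this
      linarith
    linarith

theorem stmt8 (n : ℕ) (α : ℝ) (hα0 : 0 ≤ α) (hα1 : α < 1)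
    (z : Fin n → ℝ) (hz0 : ∀ j, 0 < z j) (hz1 : ∑ j, z j = 1)
    (Pset : Fin n → Set (Fin n → ℝ))
    (hne : ∀ i, (Pset i).Nonempty) (hcpt : ∀ i, IsCompact (Pset i))
    (hform : ∀ i, ∀ p ∈ Pset i, ∃ ν ∈ stdSimplex ℝ (Fin n), p = α • ν + (1 - α) • z)
    (r : Fin n → Fin n → ℝ)
    (T : (Fin n → ℝ) → Fin n → ℝ)
    (hT : ∀ w i, T w i = sSup {val : ℝ | ∃ ν ∈ stdSimplex ℝ (Fin n),
        α • ν + (1 - α) • z ∈ Pset i ∧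
        val = α * (ν ⬝ᵥ (r i + w)) + (1 - α) * (z ⬝ᵥ r i)}) :
    (∃! w : Fin n → ℝ, T w = w) ∧
    ∀ w : Fin n → ℝ, T w = w →
      ∀ i, w i + (1 - α) * (z ⬝ᵥ w) =
        sSup {val : ℝ | ∃ ν ∈ Pset i, val = ν ⬝ᵥ (r i + w)} := by
  set S : (Fin n → ℝ) → Fin n → Set ℝ := fun w i =>
    {val : ℝ | ∃ ν ∈ stdSimplex ℝ (Fin n),
        α • ν + (1 - α) • z ∈ Pset i ∧
        val = α * (ν ⬝ᵥ (r i + w)) + (1 - α) * (z ⬝ᵥ r i)} with hS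
  have hSne : ∀ w i, (S w i).Nonempty := by
    intro w i
    obtain ⟨p, hp⟩ := hne i
    obtain ⟨ν, hνs, hpe⟩ := hform i p hp
    exact ⟨_, ν, hνs, hpe ▸ hp, rfl⟩
  have hSbdd : ∀ w i, BddAbove (S w i) := by
    intro w i
    refine ⟨α * (∑ j, |(r i + w) j|) + (1 - α) * (z ⬝ᵥ r i), ?_⟩
    rintro _ ⟨ν, hνs, _, rfl⟩
    have := simplex_dot_le ν (r i + w) hνs
    nlinarith
  have hdot : ∀ (ν : Fin n → ℝ), ν ∈ stdSimplex ℝ (Fin n) →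
      ∀ (i : Fin n) (w w' : Fin n → ℝ),
        ν ⬝ᵥ (r i + w) - ν ⬝ᵥ (r i + w') ≤ dist w w' := by
    intro ν hνs i w w'
    have h1 : ν ⬝ᵥ (r i + w) - ν ⬝ᵥ (r i + w') = ν ⬝ᵥ (w - w') := by
      rw [← dotProduct_sub]
      congr 1
      abel
    rw [h1]
    calc ν ⬝ᵥ (w - w') = ∑ j, ν j * (w j - w' j) := rfl
    _ ≤ ∑ j, ν j * dist w w' := by
        apply Finset.sum_le_sum
        intro j _
        have hd := dist_le_pi_dist w w' j
        rw [Real.dist_eq] at hd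
        exact mul_le_mul_of_nonneg_left (le_trans (le_abs_self _) hd) (hνs.1 j)
    _ = dist w w' := by rw [← Finset.sum_mul, hνs.2, one_mul]
  have key : ∀ (w w' : Fin n → ℝ) (i : Fin n), T w i ≤ T w' i + α * dist w w' := by
    intro w w' i
    rw [hT, hT]
    apply csSup_le (hSne w i)
    rintro _ ⟨ν, hνs, hmem, rfl⟩
    have h1 : α * (ν ⬝ᵥ (r i + w')) + (1 - α) * (z ⬝ᵥ r i) ≤ sSup (S w' i) :=
      le_csSup (hSbdd w' i) ⟨ν, hνs, hmem, rfl⟩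
    have h2 := hdot ν hνs i w w'
    nlinarith
  have hlip : LipschitzWith ⟨α, hα0⟩ T := by
    apply LipschitzWith.of_dist_le_mul
    intro w w'
    have hc : (0:ℝ) ≤ α * dist w w' := mul_nonneg hα0 dist_nonneg
    show dist (T w) (T w') ≤ α * dist w w'
    rw [dist_pi_le_iff hc]
    intro i
    rw [Real.dist_eq, abs_sub_le_iff]
    constructor
    · linarith [key w w' i]
    · have := key w' w i
      rw [dist_comm w' w] at this
      linarith
  have hcontr : ContractingWith ⟨α, hα0⟩ T := ⟨by exact_mod_cast hα1, hlip⟩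
  have hfix : T (hcontr.fixedPoint T) = hcontr.fixedPoint T := hcontr.fixedPoint_isFixedPt
  refine ⟨⟨hcontr.fixedPoint T, hfix, fun y hy => hcontr.fixedPoint_unique hy⟩, ?_⟩
  intro w hw i
  set c := (1 - α) * (z ⬝ᵥ w) with hc
  have hset : {val : ℝ | ∃ ν ∈ Pset i, val = ν ⬝ᵥ (r i + w)} = (fun x => x + c) '' (S w i) := by
    ext val
    constructor
    · rintro ⟨p, hp, rfl⟩
      obtain ⟨ν, hνs, hpe⟩ := hform i p hp
      refine ⟨α * (ν ⬝ᵥ (r i + w)) + (1 - α) * (z ⬝ᵥ r i), ⟨ν, hνs, hpe ▸ hp, rfl⟩, ?_⟩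
      rw [hpe]
      simp only [add_dotProduct, smul_dotProduct, smul_eq_mul, dotProduct_add]
      ring
    · rintro ⟨_, ⟨ν, hνs, hmem, rfl⟩, rfl⟩
      refine ⟨α • ν + (1 - α) • z, hmem, ?_⟩
      simp only [add_dotProduct, smul_dotProduct, smul_eq_mul, dotProduct_add]
      ring
  rw [hset, sSup_image_add _ _ (hSne w i) (hSbdd w i)]
  have : w i = sSup (S w i) := by rw [← hT]; rw [hw]
  rw [this]
end

section
/- Let S be a substochastic matrix with spectral radius < 1 obtained as S with α ∈ [0,1); define the mean reward before teleportation v(P) = (I − αS)^{-1} r̄ where P = αS + (1−α)ez, r̄_i = ∑_j P_{i,j} r'_i with reward depending only on the current page. Then P v(P) = v(P) − r̄ + (π r̄) e, where π is the invariant measure of P. -/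
open BigOperators Matrix

/-- A row-stochastic matrix. -/
def IsStochasticMat {n : ℕ} (P : Matrix (Fin n) (Fin n) ℝ) : Prop :=
  (∀ i j, 0 ≤ P i j) ∧ (∀ i, ∑ j, P i j = 1)

theorem stmt11 (n : ℕ) (α : ℝ) (hα0 : 0 ≤ α) (hα1 : α < 1)
    (S : Matrix (Fin n) (Fin n) ℝ) (hS : IsStochasticMat S)
    (z : Fin n → ℝ) (hz0 : ∀ j, 0 < z j) (hz1 : ∑ j, z j = 1)
    (P : Matrix (Fin n) (Fin n) ℝ)
    (hP : P = α • S + (1 - α) • Matrix.of fun _ j => z j)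
    (r' : Fin n → ℝ) (rbar : Fin n → ℝ) (hrbar : ∀ i, rbar i = ∑ j, P i j * r' i)
    (v : Fin n → ℝ) (hv : (1 - α • S) *ᵥ v = rbar)
    (piv : Fin n → ℝ) (hpiv0 : ∀ i, 0 ≤ piv i) (hpiv1 : ∑ i, piv i = 1)
    (hinv : piv ᵥ* P = piv) :
    P *ᵥ v = v - rbar + (piv ⬝ᵥ rbar) • (fun _ => (1 : ℝ)) := by
  have hαSv : α • (S *ᵥ v) = v - rbar := by
    rw [sub_mulVec, one_mulVec, smul_mulVec] at hv
    have : v - α • (S *ᵥ v) = rbar := hv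
    ext i
    have := congrFun this i
    simp only [Pi.sub_apply, Pi.smul_apply, smul_eq_mul] at this ⊢
    linarith
  have hPv : P *ᵥ v = (v - rbar) + ((1 - α) * (z ⬝ᵥ v)) • (fun _ => (1 : ℝ)) := by
    subst hP
    rw [add_mulVec, smul_mulVec, smul_mulVec, hαSv]
    congr 1
    ext i
    simp [mulVec, dotProduct, mul_comm]
  have hdot : piv ⬝ᵥ rbar = (1 - α) * (z ⬝ᵥ v) := by
    have h1 : piv ⬝ᵥ (P *ᵥ v) = piv ⬝ᵥ v := by
      rw [dotProduct_mulVec, hinv]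
    rw [hPv] at h1
    have h2 : piv ⬝ᵥ ((v - rbar) + ((1 - α) * (z ⬝ᵥ v)) • (fun _ => (1 : ℝ)))
        = piv ⬝ᵥ v - piv ⬝ᵥ rbar + (1 - α) * (z ⬝ᵥ v) := by
      rw [dotProduct_add, dotProduct_sub, dotProduct_smul]
      have : piv ⬝ᵥ (fun _ => (1 : ℝ)) = 1 := by
        simp [dotProduct, hpiv1]
      rw [this]
      simp only [smul_eq_mul]; ring
    rw [h2] at h1
    linarith
  rw [hPv, hdot]
end

section
/- Suppose rewards satisfy r_{i,j} = r'_i (dependent only on the current page). A stochastic matrix P with rows P_{i,·} ∈ P_i (each P_i a compact convex set of probability vectors of the form αν+(1−α)z) is an optimal solution of the ergodic PageRank optimization problem if and only if for every i, P_{i,·} maximizes the linear functional ν ↦ ν·v(P) over P_i, where v(P) = (I − αS)^{-1} r̄ is the mean reward before teleportation. -/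
open BigOperators Matrix

theorem stmt12 (n : ℕ) (α : ℝ) (hα0 : 0 ≤ α) (hα1 : α < 1)
    (z : Fin n → ℝ) (hz0 : ∀ j, 0 < z j) (hz1 : ∑ j, z j = 1)
    (Pset : Fin n → Set (Fin n → ℝ))
    (hne : ∀ i, (Pset i).Nonempty) (hcpt : ∀ i, IsCompact (Pset i))
    (hconv : ∀ i, Convex ℝ (Pset i))
    (hform : ∀ i, ∀ p ∈ Pset i, ∃ ν ∈ stdSimplex ℝ (Fin n), p = α • ν + (1 - α) • z)
    (r' : Fin n → ℝ)
    -- `pf P'` is the unique invariant probability measure of any admissible matrix `P'`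
    (pf : Matrix (Fin n) (Fin n) ℝ → Fin n → ℝ)
    (hpf : ∀ P' : Matrix (Fin n) (Fin n) ℝ, (∀ i, P' i ∈ Pset i) →
      (∀ i, 0 ≤ pf P' i) ∧ (∑ i, pf P' i = 1) ∧ (pf P') ᵥ* P' = pf P')
    -- the admissible matrix `P`, written `P = α S + (1-α) e z`
    (P S : Matrix (Fin n) (Fin n) ℝ) (hadm : ∀ i, P i ∈ Pset i)
    (hPS : P = α • S + (1 - α) • Matrix.of fun _ j => z j)
    -- `v = (I - α S)⁻¹ r̄` is the mean reward before teleportation (here `r̄ = r'`)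
    (v : Fin n → ℝ) (hv : (1 - α • S) *ᵥ v = r') :
    IsGreatest
      {u : ℝ | ∃ P' : Matrix (Fin n) (Fin n) ℝ,
        (∀ i, P' i ∈ Pset i) ∧ u = ∑ i, pf P' i * r' i}
      (∑ i, pf P i * r' i)
    ↔ ∀ i, ∀ ν ∈ Pset i, ν ⬝ᵥ v ≤ P i ⬝ᵥ v := by
  have hSv : ∀ i, r' i = v i - α * (S *ᵥ v) i := by
    intro i
    have h := congrFun hv i
    simp [Matrix.sub_mulVec, Matrix.one_mulVec, Matrix.smul_mulVec] at h
    linarith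
  have hPv : ∀ i, P i ⬝ᵥ v = α * (S *ᵥ v) i + (1 - α) * (z ⬝ᵥ v) := by
    intro i
    rw [hPS]
    simp [Matrix.mulVec, dotProduct, Finset.mul_sum, mul_add, add_mul,
      Finset.sum_add_distrib, mul_comm, mul_assoc, mul_left_comm]
  have hr : ∀ i, r' i = v i - (P i ⬝ᵥ v) + (1 - α) * (z ⬝ᵥ v) := by
    intro i; rw [hSv i, hPv i]; ring
  -- key identity
  have key : ∀ P' : Matrix (Fin n) (Fin n) ℝ, (∀ i, P' i ∈ Pset i) →
      ∑ i, pf P' i * r' i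
        = (∑ i, pf P' i * (P' i ⬝ᵥ v - P i ⬝ᵥ v)) + (1 - α) * (z ⬝ᵥ v) := by
    intro P' hP'
    obtain ⟨hpos, hsum, hinv⟩ := hpf P' hP'
    have hfix : ∑ i, pf P' i * v i = ∑ i, pf P' i * (P' i ⬝ᵥ v) := by
      calc ∑ i, pf P' i * v i = (pf P' ᵥ* P') ⬝ᵥ v := by rw [hinv]; rfl
      _ = pf P' ⬝ᵥ (P' *ᵥ v) := (Matrix.dotProduct_mulVec _ _ _).symm
      _ = ∑ i, pf P' i * (P' i ⬝ᵥ v) := rfl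
    have e1 : ∑ i, pf P' i * r' i
        = ∑ i, (pf P' i * v i - pf P' i * (P i ⬝ᵥ v)
            + pf P' i * ((1 - α) * (z ⬝ᵥ v))) := by
      refine Finset.sum_congr rfl fun i _ => ?_
      rw [hr i]; ring
    rw [e1]
    rw [Finset.sum_add_distrib, Finset.sum_sub_distrib, hfix,
      ← Finset.sum_mul, hsum, one_mul, ← Finset.sum_sub_distrib]
    congr 1
    refine Finset.sum_congr rfl fun i _ => ?_
    ring
  have hc : ∑ i, pf P i * r' i = (1 - α) * (z ⬝ᵥ v) := by
    rw [key P hadm]; simp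
  constructor
  · intro hG i ν hν
    by_contra hlt
    push_neg at hlt
    set P' : Matrix (Fin n) (Fin n) ℝ := Function.update P i ν with hP'def
    have hP'i : P' i = ν := Function.update_self i ν P
    have hP'ne : ∀ j, j ≠ i → P' j = P j := fun j hj => Function.update_of_ne hj ν P
    have hP'adm : ∀ j, P' j ∈ Pset j := by
      intro j
      by_cases h : j = i
      · subst h; rw [hP'i]; exact hν
      · rw [hP'ne j h]; exact hadm j
    obtain ⟨hpos, hsum, hinv⟩ := hpf P' hP'adm
    have hzi : (1 - α) * z i ≤ pf P' i := by
      have hlow : ∀ j, (1 - α) * z i ≤ P' j i := by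
        intro j
        obtain ⟨ν', hν', hform'⟩ := hform j (P' j) (hP'adm j)
        have hν'0 : 0 ≤ ν' i := hν'.1 i
        have hval : P' j i = α * ν' i + (1 - α) * z i := by
          rw [hform']; simp [smul_eq_mul]
        nlinarith
      have h1 : (pf P' ᵥ* P') i = ∑ j, pf P' j * P' j i := rfl
      have h2 : (pf P' ᵥ* P') i = pf P' i := congrFun hinv i
      calc (1 - α) * z i = ∑ j, pf P' j * ((1 - α) * z i) := by
            rw [← Finset.sum_mul, hsum, one_mul]
        _ ≤ ∑ j, pf P' j * P' j i :=
            Finset.sum_le_sum fun j _ => mul_le_mul_of_nonneg_left (hlow j) (hpos j)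
        _ = pf P' i := by rw [← h1, h2]
    have hzpos : 0 < pf P' i :=
      lt_of_lt_of_le (mul_pos (by linarith) (hz0 i)) hzi
    have hval' : ∑ j, pf P' j * r' j
        = pf P' i * (ν ⬝ᵥ v - P i ⬝ᵥ v) + (1 - α) * (z ⬝ᵥ v) := by
      rw [key P' hP'adm]
      congr 1
      rw [Finset.sum_eq_single i]
      · rw [hP'i]
      · intro j _ hj; rw [hP'ne j hj]; ring
      · intro h; exact absurd (Finset.mem_univ i) h
    have hle := hG.2 ⟨P', hP'adm, rfl⟩
    rw [hc, hval'] at hle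
    nlinarith
  · intro hmax
    constructor
    · exact ⟨P, hadm, rfl⟩
    · rintro u ⟨P', hP', rfl⟩
      rw [key P' hP', hc]
      have hnp : ∑ i, pf P' i * (P' i ⬝ᵥ v - P i ⬝ᵥ v) ≤ 0 := by
        refine Finset.sum_nonpos fun i _ => mul_nonpos_of_nonneg_of_nonpos
          ((hpf P' hP').1 i) ?_
        have := hmax i (P' i) (hP' i)
        linarith
      linarith
end

section
/- Consider a Markov decision process state i with transition vectors constrained to a convex set, and let I be the set of pages of interest. If v and ṽ denote the vectors v = (I_n − αS)^{-1} r̄ and ṽ = (I_n − αS̃)^{-1} r̄ where S and S̃ are stochastic matrices that agree on all rows corresponding to states at distance at most R (in the directed graph of S) from I, then |v_i − ṽ_i| ≤ α^{R+1} (2/(1−α)) ‖r̄‖_∞ for all i ∈ I. -/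
open BigOperators Matrix

lemma stmt14_aux_eq {n : ℕ} (α : ℝ) (P : Matrix (Fin n) (Fin n) ℝ)
    (rbar w : Fin n → ℝ) (h : (1 - α • P) *ᵥ w = rbar) :
    ∀ i, w i = rbar i + α * ∑ j, P i j * w j := by
  intro i
  have h2 : w i - α * ∑ j, P i j * w j = rbar i := by
    have := congrFun h i
    rw [Matrix.sub_mulVec, Matrix.smul_mulVec, Matrix.one_mulVec] at this
    simpa [Matrix.mulVec, dotProduct] using this
  linarith

lemma stmt14_aux_bound {n : ℕ} (i0 : Fin n) (α : ℝ) (hα0 : 0 ≤ α) (hα1 : α < 1)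
    (P : Matrix (Fin n) (Fin n) ℝ) (hP : IsStochasticMat P) (rbar w : Fin n → ℝ)
    (hw : ∀ i, w i = rbar i + α * ∑ j, P i j * w j) :
    ∀ i, |w i| ≤ ‖rbar‖ / (1 - α) := by
  have hne : (Finset.univ : Finset (Fin n)).Nonempty := ⟨i0, Finset.mem_univ _⟩
  set B := Finset.univ.sup' hne (fun i => |w i|) with hB
  have hBle : ∀ j, |w j| ≤ B := fun j => Finset.le_sup' (f := fun i => |w i|) (Finset.mem_univ j)
  obtain ⟨k, -, hk⟩ := Finset.exists_mem_eq_sup' hne (fun i => |w i|)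
  have h1 : B ≤ ‖rbar‖ + α * B := by
    have hkB : B = |w k| := hB.trans hk
    calc B = |rbar k + α * ∑ j, P k j * w j| := by rw [hkB, hw k]
      _ ≤ |rbar k| + |α * ∑ j, P k j * w j| := abs_add_le _ _
      _ = |rbar k| + α * |∑ j, P k j * w j| := by rw [abs_mul, abs_of_nonneg hα0]
      _ ≤ ‖rbar‖ + α * B := by
          gcongr
          · simpa [Real.norm_eq_abs] using norm_le_pi_norm rbar k
          · calc |∑ j, P k j * w j| ≤ ∑ j, |P k j * w j| := Finset.abs_sum_le_sum_abs _ _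
              _ = ∑ j, P k j * |w j| := by
                  refine Finset.sum_congr rfl fun j _ => ?_
                  rw [abs_mul, abs_of_nonneg (hP.1 k j)]
              _ ≤ ∑ j, P k j * B := by
                  refine Finset.sum_le_sum fun j _ => ?_
                  exact mul_le_mul_of_nonneg_left (hBle j) (hP.1 k j)
              _ = B := by rw [← Finset.sum_mul, hP.2 k, one_mul]
  have h1α : (0:ℝ) < 1 - α := by linarith
  have hBbound : B ≤ ‖rbar‖ / (1 - α) := by
    rw [le_div_iff₀ h1α]; nlinarith
  exact fun i => le_trans (hBle i) hBbound

theorem stmt14 (n : ℕ) (α : ℝ) (hα0 : 0 ≤ α) (hα1 : α < 1)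
    (S St : Matrix (Fin n) (Fin n) ℝ)
    (hS : IsStochasticMat S) (hSt : IsStochasticMat St)
    (rbar : Fin n → ℝ) (I : Set (Fin n)) (R : ℕ)
    -- every directed path (in the graph of S) of length ≤ R starting in I
    -- only visits rows on which S and S̃ agree
    (hagree : ∀ (p : ℕ → Fin n) (m : ℕ), m ≤ R → p 0 ∈ I →
      (∀ t < m, S (p t) (p (t + 1)) ≠ 0) → ∀ j, S (p m) j = St (p m) j)
    (v vt : Fin n → ℝ)
    (hv : (1 - α • S) *ᵥ v = rbar) (hvt : (1 - α • St) *ᵥ vt = rbar) :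
    ∀ i ∈ I, |v i - vt i| ≤ α ^ (R + 1) * (2 / (1 - α)) * ‖rbar‖ := by
  intro i hiI
  have h1α : (0:ℝ) < 1 - α := by linarith
  have hveq := stmt14_aux_eq α S rbar v hv
  have hvteq := stmt14_aux_eq α St rbar vt hvt
  set M : ℝ := ‖rbar‖ / (1 - α) with hM
  have hMnn : 0 ≤ M := div_nonneg (norm_nonneg _) (le_of_lt h1α)
  have hvb := stmt14_aux_bound i α hα0 hα1 S hS rbar v hveq
  have hvtb := stmt14_aux_bound i α hα0 hα1 St hSt rbar vt hvteq
  have hdb : ∀ j, |v j - vt j| ≤ 2 * M := by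
    intro j
    calc |v j - vt j| ≤ |v j| + |vt j| := abs_sub _ _
      _ ≤ M + M := add_le_add (hvb j) (hvtb j)
      _ = 2 * M := by ring
  -- key induction
  have key : ∀ m : ℕ, ∀ i : Fin n,
      (∀ (p : ℕ → Fin n) (m' : ℕ), m' ≤ m → p 0 = i →
        (∀ t < m', S (p t) (p (t + 1)) ≠ 0) → ∀ j, S (p m') j = St (p m') j) →
      |v i - vt i| ≤ α ^ (m + 1) * (2 * M) := by
    intro m
    induction m with
    | zero =>
        intro i hQ
        have hrow : ∀ j, S i j = St i j := by
          have := hQ (fun _ => i) 0 le_rfl rfl (by omega)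
          simpa using this
        have hd : v i - vt i = α * ∑ j, S i j * (v j - vt j) := by
          rw [hveq i, hvteq i]
          have : ∑ j, St i j * vt j = ∑ j, S i j * vt j := by
            refine Finset.sum_congr rfl fun j _ => by rw [hrow j]
          rw [this, show (∑ j, S i j * (v j - vt j))
              = (∑ j, S i j * v j) - ∑ j, S i j * vt j from by
            rw [← Finset.sum_sub_distrib]
            exact Finset.sum_congr rfl fun j _ => mul_sub _ _ _]
          ring
        rw [hd]
        rw [abs_mul, abs_of_nonneg hα0, pow_one]
        gcongr
        calc |∑ j, S i j * (v j - vt j)| ≤ ∑ j, |S i j * (v j - vt j)| :=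
              Finset.abs_sum_le_sum_abs _ _
          _ = ∑ j, S i j * |v j - vt j| := by
              refine Finset.sum_congr rfl fun j _ => ?_
              rw [abs_mul, abs_of_nonneg (hS.1 i j)]
          _ ≤ ∑ j, S i j * (2 * M) :=
              Finset.sum_le_sum fun j _ => mul_le_mul_of_nonneg_left (hdb j) (hS.1 i j)
          _ = 2 * M := by rw [← Finset.sum_mul, hS.2 i, one_mul]
    | succ m ih =>
        intro i hQ
        have hrow : ∀ j, S i j = St i j := by
          have := hQ (fun _ => i) 0 (by omega) rfl (by omega)
          simpa using this
        have hnext : ∀ j : Fin n, S i j ≠ 0 →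
            (∀ (p : ℕ → Fin n) (m' : ℕ), m' ≤ m → p 0 = j →
              (∀ t < m', S (p t) (p (t + 1)) ≠ 0) → ∀ k, S (p m') k = St (p m') k) := by
          intro j hij p m' hm' hp0 hpath k
          set p' : ℕ → Fin n := fun t => if t = 0 then i else p (t - 1) with hp'
          have h0 : p' 0 = i := rfl
          have hm1 : m' + 1 ≤ m + 1 := by omega
          have hpath' : ∀ t < m' + 1, S (p' t) (p' (t + 1)) ≠ 0 := by
            intro t ht
            match t with
            | 0 => simpa [hp', hp0] using hij
            | Nat.succ s =>
                have hs : s < m' := by omega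
                simpa [hp'] using hpath s hs
          have := hQ p' (m' + 1) hm1 h0 hpath' k
          simpa [hp'] using this
        have hd : v i - vt i = α * ∑ j, S i j * (v j - vt j) := by
          rw [hveq i, hvteq i]
          have : ∑ j, St i j * vt j = ∑ j, S i j * vt j := by
            refine Finset.sum_congr rfl fun j _ => by rw [hrow j]
          rw [this, show (∑ j, S i j * (v j - vt j))
              = (∑ j, S i j * v j) - ∑ j, S i j * vt j from by
            rw [← Finset.sum_sub_distrib]
            exact Finset.sum_congr rfl fun j _ => mul_sub _ _ _]
          ring
        rw [hd, abs_mul, abs_of_nonneg hα0]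
        have hsum : |∑ j, S i j * (v j - vt j)| ≤ α ^ (m + 1) * (2 * M) := by
          calc |∑ j, S i j * (v j - vt j)| ≤ ∑ j, |S i j * (v j - vt j)| :=
                Finset.abs_sum_le_sum_abs _ _
            _ = ∑ j, S i j * |v j - vt j| := by
                refine Finset.sum_congr rfl fun j _ => ?_
                rw [abs_mul, abs_of_nonneg (hS.1 i j)]
            _ ≤ ∑ j, S i j * (α ^ (m + 1) * (2 * M)) := by
                refine Finset.sum_le_sum fun j _ => ?_
                by_cases hij : S i j = 0
                · simp [hij]
                · exact mul_le_mul_of_nonneg_left (ih j (hnext j hij)) (hS.1 i j)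
            _ = α ^ (m + 1) * (2 * M) := by rw [← Finset.sum_mul, hS.2 i, one_mul]
        calc α * |∑ j, S i j * (v j - vt j)| ≤ α * (α ^ (m + 1) * (2 * M)) := by
              exact mul_le_mul_of_nonneg_left hsum hα0
          _ = α ^ (m + 1 + 1) * (2 * M) := by ring
  have hQR : ∀ (p : ℕ → Fin n) (m' : ℕ), m' ≤ R → p 0 = i →
      (∀ t < m', S (p t) (p (t + 1)) ≠ 0) → ∀ j, S (p m') j = St (p m') j := by
    intro p m' hm' hp0 hpath j
    exact hagree p m' hm' (hp0 ▸ hiI) hpath j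
  have := key R i hQR
  calc |v i - vt i| ≤ α ^ (R + 1) * (2 * M) := this
    _ = α ^ (R + 1) * (2 / (1 - α)) * ‖rbar‖ := by
        rw [hM]; field_simp
end

section
/- Let α ∈ [0,1), P = αS + (1−α)ez with S stochastic and z a positive probability vector, π(P) its invariant measure. For the total income utility U(P) = ∑_{i,j} π_i(P) P_{i,j} r_{i,j}, the directional derivative of U at P in a direction Q (a matrix with zero row sums, tangent to the stochastic matrices) equals ∑_{i,j} (v_j(P) + r_{i,j}) π_i(P) Q_{i,j}, where v(P) = (I_n − P + (1−α)ez)^{-1} r̄ and r̄_i = ∑_j P_{i,j} r_{i,j}. -/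
/-! With `M(A) = 1 - A + (1 - α) e z`, the formula reads `π(A) = (1 - α) z M(A)⁻¹`, and along
`P + t Q` the matrix `M` moves as `M - t Q`. The derivative of matrix inversion gives
`π' = π Q M⁻¹`; here `M = 1 - α S` is invertible because the ∞-operator norm of `α S` is at most `α < 1`.
Differentiating `U(A) = ∑ πᵢ Aᵢⱼ rᵢⱼ` by the product rule, the term `π' ⬝ r̄` equals
`(π Q) ⬝ (M⁻¹ r̄) = (π Q) ⬝ v`, which produces the `vⱼ` part of the formula. -/

open BigOperators Matrix

section NormedAlgebra

variable {𝕜 R : Type*} [NontriviallyNormedField 𝕜] [NormedRing R] [HasSummableGeomSeries R]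
  [NormedAlgebra 𝕜 R]

theorem hasDerivAt_ringInverse_sub_smul (x : Rˣ) (b : R) :
    HasDerivAt (fun t : 𝕜 => Ring.inverse (↑x - t • b)) (↑x⁻¹ * b * ↑x⁻¹) 0 := by
  have hline : HasDerivAt (fun t : 𝕜 => (↑x : R) - t • b) (-b) 0 := by
    simpa using ((hasDerivAt_id (0 : 𝕜)).smul_const b).const_sub (x : R)
  have hinv : HasFDerivAt Ring.inverse (-ContinuousLinearMap.mulLeftRight 𝕜 R ↑x⁻¹ ↑x⁻¹)
      ((↑x : R) - (0 : 𝕜) • b) := by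
    simpa using hasFDerivAt_ringInverse (𝕜 := 𝕜) x
  refine (hinv.comp_hasDerivAt 0 hline).congr_deriv ?_
  simp [mul_assoc]

end NormedAlgebra

namespace Matrix

variable {ι 𝕜 : Type*} [Fintype ι] [DecidableEq ι] [NontriviallyNormedField 𝕜] [CompleteSpace 𝕜]

theorem hasDerivAt_vecMul_inv_sub_smul (z : ι → 𝕜) {M : Matrix ι ι 𝕜} (hM : IsUnit M)
    (Q : Matrix ι ι 𝕜) :
    HasDerivAt (fun t : 𝕜 => z ᵥ* (M - t • Q)⁻¹) (z ᵥ* M⁻¹ ᵥ* Q ᵥ* M⁻¹) 0 := by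
  let _ : NormedRing (Matrix ι ι 𝕜) := Matrix.linftyOpNormedRing
  let _ : NormedAlgebra 𝕜 (Matrix ι ι 𝕜) := Matrix.linftyOpNormedAlgebra
  -- `Matrix` also carries the product uniformity, so the normed one has to be named
  have : @CompleteSpace (Matrix ι ι 𝕜) PseudoMetricSpace.toUniformSpace :=
    FiniteDimensional.complete 𝕜 _
  obtain ⟨u, rfl⟩ := hM
  let L : Matrix ι ι 𝕜 →L[𝕜] ι → 𝕜 := LinearMap.toContinuousLinearMap (vecMulBilin 𝕜 𝕜 z)
  have hL := L.hasFDerivAt.comp_hasDerivAt 0 (hasDerivAt_ringInverse_sub_smul (𝕜 := 𝕜) u Q)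
  have hfun : (fun t : 𝕜 => z ᵥ* ((u : Matrix ι ι 𝕜) - t • Q)⁻¹) =
      L ∘ fun t => Ring.inverse ((u : Matrix ι ι 𝕜) - t • Q) :=
    funext fun t => congrArg (z ᵥ* ·) (nonsing_inv_eq_ringInverse _)
  have hu : ((u⁻¹ : (Matrix ι ι 𝕜)ˣ) : Matrix ι ι 𝕜) = (u : Matrix ι ι 𝕜)⁻¹ := by
    rw [nonsing_inv_eq_ringInverse, Ring.inverse_unit]
  rw [hfun]
  refine hL.congr_deriv ?_
  rw [hu, vecMul_vecMul, vecMul_vecMul, ← Matrix.mul_assoc]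
  rfl

end Matrix

theorem IsStochasticMat.isUnit_one_sub_smul {n : ℕ} {S : Matrix (Fin n) (Fin n) ℝ}
    (hS : IsStochasticMat S) {α : ℝ} (hα : |α| < 1) : IsUnit (1 - α • S) := by
  let _ : NormedRing (Matrix (Fin n) (Fin n) ℝ) := Matrix.linftyOpNormedRing
  let _ : NormedAlgebra ℝ (Matrix (Fin n) (Fin n) ℝ) := Matrix.linftyOpNormedAlgebra
  have : @CompleteSpace (Matrix (Fin n) (Fin n) ℝ) PseudoMetricSpace.toUniformSpace :=
    FiniteDimensional.complete ℝ _
  have hS_norm : ‖S‖₊ ≤ 1 := by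
    rw [Matrix.linfty_opNNNorm_def]
    refine Finset.sup_le fun i _ => le_of_eq ?_
    rw [← NNReal.coe_inj]
    push_cast
    rw [← hS.2 i]
    exact Finset.sum_congr rfl fun j _ => Real.norm_of_nonneg (hS.1 i j)
  have h_lt : ‖α • S‖ < 1 := by
    rw [norm_smul, Real.norm_eq_abs]
    calc |α| * ‖S‖ ≤ |α| * 1 := by gcongr; exact_mod_cast hS_norm
      _ < 1 := by rwa [mul_one]
  exact (Units.oneSub (α • S) h_lt).isUnit

theorem hasDerivAt_sum_sum_mul_add_smul_mul {ι 𝕜 : Type*} [Fintype ι] [NontriviallyNormedField 𝕜]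
    {π : 𝕜 → ι → 𝕜} {π' : ι → 𝕜} (hπ : HasDerivAt π π' 0) (A B : Matrix ι ι 𝕜)
    (r : ι → ι → 𝕜) :
    HasDerivAt (fun t => ∑ i, ∑ j, π t i * (A + t • B) i j * r i j)
      (∑ i, ∑ j, (π' i * A i j + π 0 i * B i j) * r i j) 0 := by
  refine HasDerivAt.fun_sum fun i _ => HasDerivAt.fun_sum fun j _ => ?_
  have hline : HasDerivAt (fun t : 𝕜 => (A + t • B) i j) (B i j) 0 := by
    simpa using ((hasDerivAt_id (0 : 𝕜)).mul_const (B i j)).const_add (A i j)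
  refine ((hasDerivAt_pi.1 hπ i).mul hline).mul_const (r i j) |>.congr_deriv ?_
  simp

theorem sum_sum_vecMul_mul_add_mul_mul_eq {ι R : Type*} [Fintype ι] [CommRing R]
    (π : ι → R) (N P Q : Matrix ι ι R) (r : ι → ι → R) {rbar v : ι → R}
    (hrbar : ∀ i, rbar i = ∑ j, P i j * r i j) (hv : N *ᵥ rbar = v) :
    ∑ i, ∑ j, ((π ᵥ* Q ᵥ* N) i * P i j + π i * Q i j) * r i j =
      ∑ i, ∑ j, (v j + r i j) * π i * Q i j := by
  calc ∑ i, ∑ j, ((π ᵥ* Q ᵥ* N) i * P i j + π i * Q i j) * r i j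
      = (π ᵥ* Q ᵥ* N) ⬝ᵥ rbar + ∑ i, ∑ j, π i * Q i j * r i j := by
        simp only [dotProduct, hrbar, Finset.mul_sum, ← Finset.sum_add_distrib, add_mul, mul_assoc]
    _ = (π ᵥ* Q) ⬝ᵥ v + ∑ i, ∑ j, π i * Q i j * r i j := by
        rw [← dotProduct_mulVec, hv]
    _ = ∑ i, ∑ j, (v j + r i j) * π i * Q i j := by
        simp only [dotProduct, vecMul, Finset.sum_mul]
        rw [Finset.sum_comm, ← Finset.sum_add_distrib]
        refine Finset.sum_congr rfl fun i _ => ?_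
        rw [← Finset.sum_add_distrib]
        exact Finset.sum_congr rfl fun j _ => by ring

theorem stmt16_general (n : ℕ) (α : ℝ) (hα0 : 0 ≤ α) (hα1 : α < 1)
    (z : Fin n → ℝ)
    (r : Fin n → Fin n → ℝ)
    (S : Matrix (Fin n) (Fin n) ℝ) (hS : IsStochasticMat S)
    (P : Matrix (Fin n) (Fin n) ℝ)
    (hP : P = α • S + (1 - α) • Matrix.of fun _ j => z j)
    -- explicit formula for the invariant measure, extended to matrices near P
    (pf : Matrix (Fin n) (Fin n) ℝ → Fin n → ℝ)
    (hpf : ∀ A, pf A = (1 - α) • (z ᵥ* (1 - A + (1 - α) • Matrix.of fun _ j => z j)⁻¹))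
    (U : Matrix (Fin n) (Fin n) ℝ → ℝ)
    (hU : ∀ A, U A = ∑ i, ∑ j, pf A i * A i j * r i j)
    (Q : Matrix (Fin n) (Fin n) ℝ)
    (rbar : Fin n → ℝ) (hrbar : ∀ i, rbar i = ∑ j, P i j * r i j)
    (v : Fin n → ℝ)
    (hv : (1 - P + (1 - α) • Matrix.of fun _ j => z j) *ᵥ v = rbar) :
    HasDerivAt (fun t : ℝ => U (P + t • Q))
      (∑ i, ∑ j, (v j + r i j) * pf P i * Q i j) 0 := by
  set M := 1 - P + (1 - α) • Matrix.of fun _ j => z j with hM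
  have hM_unit : IsUnit M := by
    have hM_eq : M = 1 - α • S := by rw [hM, hP]; abel
    exact hM_eq ▸ hS.isUnit_one_sub_smul (abs_lt.2 ⟨by linarith, hα1⟩)
  have hpf_line (t : ℝ) : pf (P + t • Q) = (1 - α) • (z ᵥ* (M - t • Q)⁻¹) := by
    rw [hpf, hM]
    congr 3
    abel
  have hπ : HasDerivAt (fun t : ℝ => pf (P + t • Q)) (pf P ᵥ* Q ᵥ* M⁻¹) 0 := by
    simp only [hpf_line]
    refine ((Matrix.hasDerivAt_vecMul_inv_sub_smul z hM_unit Q).const_smul (1 - α)).congr_deriv ?_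
    rw [hpf, ← hM, smul_vecMul, smul_vecMul]
  have hv' : M⁻¹ *ᵥ rbar = v := by
    rw [← hv, mulVec_mulVec, nonsing_inv_mul _ ((isUnit_iff_isUnit_det M).1 hM_unit), one_mulVec]
  simp only [hU]
  refine (hasDerivAt_sum_sum_mul_add_smul_mul hπ P Q r).congr_deriv ?_
  rw [zero_smul, add_zero]
  exact sum_sum_vecMul_mul_add_mul_mul_eq _ M⁻¹ P Q r hrbar hv'

theorem stmt16 (n : ℕ) (α : ℝ) (hα0 : 0 ≤ α) (hα1 : α < 1)
    (z : Fin n → ℝ) (hz0 : ∀ j, 0 < z j) (hz1 : ∑ j, z j = 1)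
    (r : Fin n → Fin n → ℝ)
    (S : Matrix (Fin n) (Fin n) ℝ) (hS : IsStochasticMat S)
    (P : Matrix (Fin n) (Fin n) ℝ)
    (hP : P = α • S + (1 - α) • Matrix.of fun _ j => z j)
    -- explicit formula for the invariant measure, extended to matrices near P
    (pf : Matrix (Fin n) (Fin n) ℝ → Fin n → ℝ)
    (hpf : ∀ A, pf A = (1 - α) • (z ᵥ* (1 - A + (1 - α) • Matrix.of fun _ j => z j)⁻¹))
    (U : Matrix (Fin n) (Fin n) ℝ → ℝ)
    (hU : ∀ A, U A = ∑ i, ∑ j, pf A i * A i j * r i j)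
    -- a tangent direction: each row of Q sums to zero
    (Q : Matrix (Fin n) (Fin n) ℝ) (hQ : ∀ i, ∑ j, Q i j = 0)
    (rbar : Fin n → ℝ) (hrbar : ∀ i, rbar i = ∑ j, P i j * r i j)
    (v : Fin n → ℝ)
    (hv : (1 - P + (1 - α) • Matrix.of fun _ j => z j) *ᵥ v = rbar) :
    HasDerivAt (fun t : ℝ => U (P + t • Q))
      (∑ i, ∑ j, (v j + r i j) * pf P i * Q i j) 0 :=
  stmt16_general n α hα0 hα1 z r S hS P hP pf hpf U hU Q rbar hrbar v hv
end

section
/- Assume P = ∏_{i=1}^n P_i where each P_i ⊆ Σ_n is a closed convex set and every matrix with rows in the P_i is irreducible. Then the set R of occupation measures ρ_{i,j} = π_i P_{i,j} arising from matrices P ∈ P (with π the invariant measure of P) is closed and convex; moreover if every P_i is a polytope then R is a polytope. -/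
open BigOperators Matrix

/-- A nonnegative matrix is irreducible: for all `i j` some power has positive `(i,j)` entry. -/
def IsIrredMat {n : ℕ} (A : Matrix (Fin n) (Fin n) ℝ) : Prop :=
  ∀ i j, ∃ k : ℕ, 0 < (A ^ k) i j

/-!
Writing `ρ = diagonal π * P`, the conditions on `(π, P)` become linear conditions on `ρ`:
`π = ρ *ᵥ 1` is recovered as the vector of row sums, stationarity says that column sums equal
row sums, and `P i ∈ Pset i` says that row `i` of `ρ` lies in the cone `Ici 0 • Pset i`.
So the set of occupation measures is an intersection of convex sets; it is closed as the
continuous image of a compact set of pairs `(P, π)`. When `Pset i = convexHull (V i)`, writing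
each row as a nonnegative combination of `V i` exhibits the set as the linear image of a bounded
polyhedron `{l | 0 ≤ l ∧ L l = c}`. A point of such a polyhedron is extreme only if no other
point has the same zero set, so it has finitely many extreme points, and Krein–Milman makes it
their convex hull.
-/

open Filter Topology
open scoped Pointwise

section StandardForm

variable {ι F : Type*} [Fintype ι] [NormedAddCommGroup F] [NormedSpace ℝ F]
  (L : (ι → ℝ) →ₗ[ℝ] F) (c : F)

theorem finite_extremePoints_nonneg_linear_eq :
    ({x : ι → ℝ | 0 ≤ x ∧ L x = c}.extremePoints ℝ).Finite := by
  refine Set.Finite.of_finite_image (f := fun x : ι → ℝ => {i | x i = 0}) (Set.toFinite _) ?_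
  intro x hx y hy hzero
  have hzero' : ∀ i, x i = 0 → y i = 0 := fun i => (Set.ext_iff.mp hzero i).mp
  obtain ⟨ε, hε, hεy⟩ : ∃ ε : ℝ, 0 < ε ∧ ∀ i, ε * y i ≤ x i := by
    have hsmall : ∀ᶠ ε in 𝓝[>] (0 : ℝ), ∀ i, ε * y i ≤ x i := eventually_all.2 fun i => by
      rcases (hx.1.1 i).eq_or_lt with h | h
      · exact Eventually.of_forall fun ε => by simp [hzero' i h.symm, ← h]
      · have hlim : Tendsto (fun ε : ℝ => ε * y i) (𝓝[>] 0) (𝓝 0) := by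
          simpa using ((continuous_mul_const (y i)).tendsto 0).mono_left nhdsWithin_le_nhds
        exact (hlim.eventually (eventually_lt_nhds h)).mono fun _ => le_of_lt
    obtain ⟨ε, h, hε⟩ := (hsmall.and self_mem_nhdsWithin).exists
    exact ⟨ε, hε, h⟩
  -- `y` vanishes wherever `x` does, so the segment from `y` to `x` extends a little beyond `x`
  have hz : x + ε • (x - y) ∈ {x : ι → ℝ | 0 ≤ x ∧ L x = c} := by
    refine ⟨fun i => ?_, by simp [hx.1.2, hy.1.2]⟩
    have hxi : 0 ≤ x i := hx.1.1 i
    simp only [Pi.zero_apply, Pi.add_apply, Pi.smul_apply, Pi.sub_apply, smul_eq_mul]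
    nlinarith [hεy i, mul_nonneg hε.le hxi]
  have hseg : x ∈ openSegment ℝ y (x + ε • (x - y)) := by
    refine ⟨ε / (1 + ε), 1 / (1 + ε), by positivity, by positivity, by field_simp; ring, ?_⟩
    ext i
    simp only [Pi.add_apply, Pi.smul_apply, Pi.sub_apply, smul_eq_mul]
    field_simp
    ring
  exact ((mem_extremePoints.mp hx).2 y hy.1 _ hz hseg).1.symm

theorem exists_finset_nonneg_linear_eq_eq_convexHull
    (hb : Bornology.IsBounded {x : ι → ℝ | 0 ≤ x ∧ L x = c}) :
    ∃ W : Finset (ι → ℝ), {x : ι → ℝ | 0 ≤ x ∧ L x = c} = convexHull ℝ (W : Set (ι → ℝ)) := by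
  set s := {x : ι → ℝ | 0 ≤ x ∧ L x = c}
  have hclosed : IsClosed s :=
    (isClosed_le continuous_const continuous_id).inter
      (isClosed_eq L.continuous_of_finiteDimensional continuous_const)
  have hconv : Convex ℝ s := fun x hx y hy a b ha hb hab =>
    ⟨add_nonneg (smul_nonneg ha hx.1) (smul_nonneg hb hy.1), by
      rw [map_add, map_smul, map_smul, hx.2, hy.2, ← add_smul, hab, one_smul]⟩
  have hfin : (s.extremePoints ℝ).Finite := finite_extremePoints_nonneg_linear_eq L c
  refine ⟨hfin.toFinset, ?_⟩
  rw [hfin.coe_toFinset, ← (hfin.isCompact_convexHull (𝕜 := ℝ)).isClosed.closure_eq,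
    closure_convexHull_extremePoints (Metric.isCompact_of_isClosed_isBounded hclosed hb) hconv]

end StandardForm

theorem Convex.Ici_zero_smul {E : Type*} [AddCommGroup E] [Module ℝ E] {s : Set E}
    (hs : Convex ℝ s) : Convex ℝ (Set.Ici (0 : ℝ) • s) := by
  rintro _ ⟨t₁, ht₁, x₁, hx₁, rfl⟩ _ ⟨t₂, ht₂, x₂, hx₂, rfl⟩ a b ha hb -
  obtain ⟨z, hz, hzx⟩ :=
    hs.exists_mem_add_smul_eq hx₁ hx₂ (mul_nonneg ha ht₁) (mul_nonneg hb ht₂)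
  exact ⟨_, add_nonneg (mul_nonneg ha ht₁) (mul_nonneg hb ht₂), z, hz, by
    simp only [hzx, mul_smul]⟩

theorem Finset.Ici_zero_smul_convexHull {E : Type*} [AddCommGroup E] [Module ℝ E]
    {V : Finset E} (hV : V.Nonempty) :
    Set.Ici (0 : ℝ) • convexHull ℝ (V : Set E) =
      Fintype.linearCombination ℝ ((↑) : V → E) '' {w | 0 ≤ w} := by
  ext x
  simp only [Set.mem_image, Fintype.linearCombination_apply]
  constructor
  · rintro ⟨t, ht, p, hp, rfl⟩
    obtain ⟨w, hw0, -, rfl⟩ := Finset.mem_convexHull'.mp hp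
    refine ⟨fun v => t * w v, fun v => mul_nonneg ht (hw0 v v.2), ?_⟩
    simp only [mul_smul, ← Finset.smul_sum]
    rw [Finset.sum_coe_sort V fun v => w v • v]
  · rintro ⟨w, hw, rfl⟩
    rcases (Finset.sum_nonneg fun v _ => hw v : 0 ≤ ∑ v, w v).eq_or_lt with h | h
    · obtain ⟨v₀, hv₀⟩ := hV
      have hw0 : ∀ v, w v = 0 := fun v =>
        (Finset.sum_eq_zero_iff_of_nonneg fun v _ => hw v).mp h.symm v (Finset.mem_univ v)
      exact ⟨0, Set.self_mem_Ici, v₀, subset_convexHull ℝ _ hv₀, by simp [hw0]⟩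
    · refine ⟨∑ v, w v, h.le, Finset.univ.centerMass w (↑), ?_, ?_⟩
      · exact Finset.univ.centerMass_mem_convexHull (fun v _ => hw v) h fun v _ => v.2
      · exact smul_inv_smul₀ h.ne' _

section RowwiseCombination

variable {ι κ : Type*}

def rowwiseLinearCombination (V : ι → Finset (κ → ℝ)) :
    ((Σ i, V i) → ℝ) →ₗ[ℝ] Matrix ι κ ℝ :=
  LinearMap.pi fun i => Fintype.linearCombination ℝ ((↑) : V i → κ → ℝ) ∘ₗ
    LinearMap.funLeft ℝ ℝ (Sigma.mk (β := fun i => V i) i)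

theorem rowwiseLinearCombination_apply (V : ι → Finset (κ → ℝ)) (l : (Σ i, V i) → ℝ) (i : ι) :
    rowwiseLinearCombination V l i = ∑ v : V i, l ⟨i, v⟩ • (v : κ → ℝ) :=
  Fintype.linearCombination_apply ℝ _ _

theorem sum_rowwiseLinearCombination [Fintype ι] [Fintype κ] {V : ι → Finset (κ → ℝ)}
    (hV : ∀ i, ∀ v ∈ V i, ∑ k, v k = 1) (l : (Σ i, V i) → ℝ) :
    ∑ i, ∑ k, rowwiseLinearCombination V l i k = ∑ s, l s := by
  simp only [rowwiseLinearCombination_apply, Finset.sum_apply, Pi.smul_apply, smul_eq_mul,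
    Fintype.sum_sigma]
  refine Finset.sum_congr rfl fun i _ => ?_
  rw [Finset.sum_comm]
  exact Finset.sum_congr rfl fun v _ => by rw [← Finset.mul_sum, hV i v v.2, mul_one]

theorem image_rowwiseLinearCombination_nonneg {V : ι → Finset (κ → ℝ)}
    (hV : ∀ i, (V i).Nonempty) :
    rowwiseLinearCombination V '' {l | 0 ≤ l} =
      {ρ | ∀ i, ρ i ∈ Set.Ici (0 : ℝ) • convexHull ℝ (V i : Set (κ → ℝ))} := by
  ext ρ
  simp only [Finset.Ici_zero_smul_convexHull (hV _), Set.mem_image, Set.mem_ofPred_eq]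
  constructor
  · rintro ⟨l, hl, rfl⟩ i
    exact ⟨fun v => l ⟨i, v⟩, fun v => hl _, by
      rw [rowwiseLinearCombination_apply, Fintype.linearCombination_apply]⟩
  · intro h
    choose w hw hρ using h
    refine ⟨fun s => w s.1 s.2, fun s => hw s.1 s.2, funext fun i => ?_⟩
    rw [rowwiseLinearCombination_apply, ← hρ i, Fintype.linearCombination_apply]

end RowwiseCombination

section DiagonalMul

variable {m k : Type*} [Fintype m] [DecidableEq m]

theorem diagonal_mul_mulVec_one [Fintype k] {π : m → ℝ} {P : Matrix m k ℝ}
    (hP : ∀ i, P i ∈ stdSimplex ℝ k) : (diagonal π * P) *ᵥ 1 = π := by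
  have hP1 : P *ᵥ 1 = 1 := funext fun i => by simpa [mulVec, dotProduct] using (hP i).2
  ext i
  rw [← mulVec_mulVec, hP1, mulVec_diagonal, Pi.one_apply, mul_one]

theorem one_vecMul_diagonal_mul (π : m → ℝ) (P : Matrix m k ℝ) :
    1 ᵥ* (diagonal π * P) = π ᵥ* P := by
  have h1 : (1 : m → ℝ) ᵥ* diagonal π = π := funext fun i => by simp [vecMul_diagonal]
  rw [← vecMul_vecMul, h1]

end DiagonalMul

section OccupationMeasures

variable {n : ℕ}

def occupationMeasures (Pset : Fin n → Set (Fin n → ℝ)) : Set (Matrix (Fin n) (Fin n) ℝ) :=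
  {ρ | ∃ (P : Matrix (Fin n) (Fin n) ℝ) (piv : Fin n → ℝ),
    (∀ i, P i ∈ Pset i) ∧ (∀ i, 0 ≤ piv i) ∧ (∑ i, piv i = 1) ∧
    piv ᵥ* P = piv ∧ ∀ i j, ρ i j = piv i * P i j}

def occupationConstraint (n : ℕ) : Matrix (Fin n) (Fin n) ℝ →ₗ[ℝ] ℝ × (Fin n → ℝ) where
  toFun ρ := (∑ i, (ρ *ᵥ 1) i, 1 ᵥ* ρ - ρ *ᵥ 1)
  map_add' ρ σ := by
    ext
    · simp [add_mulVec, Finset.sum_add_distrib]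
    · simp only [add_mulVec, vecMul_add, Prod.snd_add, Pi.add_apply, Pi.sub_apply]
      abel
  map_smul' c ρ := by
    ext <;> simp [smul_mulVec, vecMul_smul, Finset.mul_sum, smul_sub]

theorem occupationMeasures_eq {Pset : Fin n → Set (Fin n → ℝ)}
    (hsub : ∀ i, Pset i ⊆ stdSimplex ℝ (Fin n)) :
    occupationMeasures Pset =
      {ρ | ∀ i, ρ i ∈ Set.Ici (0 : ℝ) • Pset i} ∩ occupationConstraint n ⁻¹' {(1, 0)} := by
  ext ρ
  simp only [Set.mem_inter_iff, Set.mem_ofPred_eq, Set.mem_smul, Set.mem_preimage,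
    Set.mem_singleton_iff]
  constructor
  · rintro ⟨P, π, hP, hπ0, hπ1, hfix, hρ⟩
    obtain rfl : ρ = diagonal π * P := ext fun i j => by rw [hρ, diagonal_mul]
    refine ⟨fun i => ⟨π i, hπ0 i, P i, hP i, funext fun j => (diagonal_mul π P i j).symm⟩, ?_⟩
    simp [occupationConstraint, diagonal_mul_mulVec_one fun i => hsub i (hP i),
      one_vecMul_diagonal_mul, hfix, hπ1]
  · rintro ⟨hrow, hM⟩
    choose t ht p hp hρ using hrow
    obtain rfl : ρ = diagonal t * of p :=
      ext fun i j => by rw [diagonal_mul, of_apply, ← hρ i]; rfl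
    simp only [occupationConstraint, LinearMap.coe_mk, AddHom.coe_mk,
      diagonal_mul_mulVec_one (P := of p) fun i => hsub i (hp i), one_vecMul_diagonal_mul,
      Prod.mk.injEq, sub_eq_zero] at hM
    exact ⟨of p, t, hp, ht, hM.1, hM.2, fun i j => diagonal_mul ..⟩

theorem convex_occupationMeasures {Pset : Fin n → Set (Fin n → ℝ)}
    (hsub : ∀ i, Pset i ⊆ stdSimplex ℝ (Fin n)) (hconv : ∀ i, Convex ℝ (Pset i)) :
    Convex ℝ (occupationMeasures Pset) := by
  rw [occupationMeasures_eq hsub]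
  have hrows : Convex ℝ {ρ : Matrix (Fin n) (Fin n) ℝ | ∀ i, ρ i ∈ Set.Ici (0 : ℝ) • Pset i} :=
    fun _ hx _ hy _ _ ha hb hab i => (hconv i).Ici_zero_smul (hx i) (hy i) ha hb hab
  exact hrows.inter ((convex_singleton _).linear_preimage _)

theorem isClosed_occupationMeasures {Pset : Fin n → Set (Fin n → ℝ)}
    (hsub : ∀ i, Pset i ⊆ stdSimplex ℝ (Fin n)) (hclosed : ∀ i, IsClosed (Pset i)) :
    IsClosed (occupationMeasures Pset) := by
  set K : Set (Matrix (Fin n) (Fin n) ℝ × (Fin n → ℝ)) :=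
    Set.univ.pi Pset ×ˢ stdSimplex ℝ (Fin n) ∩ {x | x.2 ᵥ* x.1 = x.2}
  have hK : IsCompact K :=
    ((isCompact_univ_pi fun i => (isCompact_stdSimplex ℝ (Fin n)).of_isClosed_subset
      (hclosed i) (hsub i)).prod (isCompact_stdSimplex ℝ (Fin n))).inter_right
      (isClosed_eq (by fun_prop) continuous_snd)
  have hR : occupationMeasures Pset = (fun x => diagonal x.2 * x.1) '' K := by
    ext ρ
    constructor
    · rintro ⟨P, π, hP, hπ0, hπ1, hfix, hρ⟩
      exact ⟨(P, π), ⟨⟨fun i _ => hP i, hπ0, hπ1⟩, hfix⟩,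
        ext fun i j => (diagonal_mul π P i j).trans (hρ i j).symm⟩
    · rintro ⟨⟨P, π⟩, ⟨⟨hP, hπ0, hπ1⟩, hfix⟩, rfl⟩
      exact ⟨P, π, fun i => hP i trivial, hπ0, hπ1, hfix, diagonal_mul π P⟩
  rw [hR]
  exact (hK.image (by fun_prop)).isClosed

theorem exists_finset_occupationMeasures_eq_convexHull {Pset : Fin n → Set (Fin n → ℝ)}
    (hsub : ∀ i, Pset i ⊆ stdSimplex ℝ (Fin n))
    (hpoly : ∀ i, ∃ V : Finset (Fin n → ℝ), Pset i = convexHull ℝ (V : Set (Fin n → ℝ))) :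
    ∃ W : Finset (Matrix (Fin n) (Fin n) ℝ),
      occupationMeasures Pset = convexHull ℝ (W : Set (Matrix (Fin n) (Fin n) ℝ)) := by
  choose V hV using hpoly
  by_cases hne : ∀ i, (V i).Nonempty
  swap
  · push Not at hne
    obtain ⟨i, hi⟩ := hne
    refine ⟨∅, ?_⟩
    rw [Finset.coe_empty, convexHull_empty]
    refine Set.eq_empty_of_forall_notMem fun ρ hρ => ?_
    obtain ⟨P, _, hP, _⟩ := hρ
    simpa [hV, hi] using hP i
  set Φ := rowwiseLinearCombination V
  have hR : occupationMeasures Pset =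
      Φ '' {l | 0 ≤ l ∧ (occupationConstraint n ∘ₗ Φ) l = (1, 0)} := by
    simp_rw [occupationMeasures_eq hsub, hV]
    rw [← image_rowwiseLinearCombination_nonneg hne, ← Set.image_inter_preimage]
    rfl
  have hmass : ∀ l, (occupationConstraint n (Φ l)).1 = ∑ s, l s := by
    intro l
    have hV1 : ∀ i, ∀ v ∈ V i, ∑ k, v k = 1 := fun i v hv =>
      (hsub i (hV i ▸ subset_convexHull ℝ _ hv)).2
    rw [← sum_rowwiseLinearCombination hV1]
    simp [occupationConstraint, mulVec, dotProduct, Φ]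
  obtain ⟨W, hW⟩ := exists_finset_nonneg_linear_eq_eq_convexHull (occupationConstraint n ∘ₗ Φ)
    (1, 0) <| (isCompact_stdSimplex ℝ (Σ i, V i)).isBounded.subset fun l hl =>
      ⟨hl.1, (hmass l).symm.trans (congrArg Prod.fst hl.2)⟩
  refine ⟨W.image Φ, ?_⟩
  rw [hR, hW, Finset.coe_image, Φ.image_convexHull]

end OccupationMeasures

theorem stmt17_general (n : ℕ) (Pset : Fin n → Set (Fin n → ℝ))
    (hsub : ∀ i, Pset i ⊆ stdSimplex ℝ (Fin n))
    (hclosed : ∀ i, IsClosed (Pset i)) (hconv : ∀ i, Convex ℝ (Pset i)) :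
    IsClosed
      {ρ : Matrix (Fin n) (Fin n) ℝ | ∃ (P : Matrix (Fin n) (Fin n) ℝ) (piv : Fin n → ℝ),
        (∀ i, P i ∈ Pset i) ∧ (∀ i, 0 ≤ piv i) ∧ (∑ i, piv i = 1) ∧
        piv ᵥ* P = piv ∧ ∀ i j, ρ i j = piv i * P i j} ∧
    Convex ℝ
      {ρ : Matrix (Fin n) (Fin n) ℝ | ∃ (P : Matrix (Fin n) (Fin n) ℝ) (piv : Fin n → ℝ),
        (∀ i, P i ∈ Pset i) ∧ (∀ i, 0 ≤ piv i) ∧ (∑ i, piv i = 1) ∧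
        piv ᵥ* P = piv ∧ ∀ i j, ρ i j = piv i * P i j} ∧
    ((∀ i, ∃ V : Finset (Fin n → ℝ), Pset i = convexHull ℝ (V : Set (Fin n → ℝ))) →
      ∃ W : Finset (Matrix (Fin n) (Fin n) ℝ),
        {ρ : Matrix (Fin n) (Fin n) ℝ | ∃ (P : Matrix (Fin n) (Fin n) ℝ) (piv : Fin n → ℝ),
          (∀ i, P i ∈ Pset i) ∧ (∀ i, 0 ≤ piv i) ∧ (∑ i, piv i = 1) ∧
          piv ᵥ* P = piv ∧ ∀ i j, ρ i j = piv i * P i j}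
        = convexHull ℝ (W : Set (Matrix (Fin n) (Fin n) ℝ))) :=
  ⟨isClosed_occupationMeasures hsub hclosed, convex_occupationMeasures hsub hconv,
    exists_finset_occupationMeasures_eq_convexHull hsub⟩

theorem stmt17 (n : ℕ) (Pset : Fin n → Set (Fin n → ℝ))
    (hsub : ∀ i, Pset i ⊆ stdSimplex ℝ (Fin n))
    (hclosed : ∀ i, IsClosed (Pset i)) (hconv : ∀ i, Convex ℝ (Pset i))
    (hirr : ∀ P : Matrix (Fin n) (Fin n) ℝ, (∀ i, P i ∈ Pset i) → IsIrredMat P) :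
    IsClosed
      {ρ : Matrix (Fin n) (Fin n) ℝ | ∃ (P : Matrix (Fin n) (Fin n) ℝ) (piv : Fin n → ℝ),
        (∀ i, P i ∈ Pset i) ∧ (∀ i, 0 ≤ piv i) ∧ (∑ i, piv i = 1) ∧
        piv ᵥ* P = piv ∧ ∀ i j, ρ i j = piv i * P i j} ∧
    Convex ℝ
      {ρ : Matrix (Fin n) (Fin n) ℝ | ∃ (P : Matrix (Fin n) (Fin n) ℝ) (piv : Fin n → ℝ),
        (∀ i, P i ∈ Pset i) ∧ (∀ i, 0 ≤ piv i) ∧ (∑ i, piv i = 1) ∧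
        piv ᵥ* P = piv ∧ ∀ i j, ρ i j = piv i * P i j} ∧
    ((∀ i, ∃ V : Finset (Fin n → ℝ), Pset i = convexHull ℝ (V : Set (Fin n → ℝ))) →
      ∃ W : Finset (Matrix (Fin n) (Fin n) ℝ),
        {ρ : Matrix (Fin n) (Fin n) ℝ | ∃ (P : Matrix (Fin n) (Fin n) ℝ) (piv : Fin n → ℝ),
          (∀ i, P i ∈ Pset i) ∧ (∀ i, 0 ≤ piv i) ∧ (∑ i, piv i = 1) ∧
          piv ᵥ* P = piv ∧ ∀ i j, ρ i j = piv i * P i j}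
        = convexHull ℝ (W : Set (Matrix (Fin n) (Fin n) ℝ))) :=
  stmt17_general n Pset hsub hclosed hconv
end
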